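/- arXiv:1305.4019 — 6 statements merged into one kernel-verified Lean document; each statement's English description precedes it below -/
import Mathlib

section
/- For N ≥ 3 and α > 0, set p_α = (N+2+2α)/(N-2) and C_α = 1/((N-2)(N+α)). Then the function U(x) = (1 + C_α |x|^{2+α})^{-(N-2)/(2+α)} satisfies -ΔU = |x|^α U^{p_α} in ℝ^N, with U(0) = 1 and 0 < U ≤ 1. -/
/-!
Write `U x = g (‖x‖ ^ 2)` with `g t = (1 + C t ^ b) ^ (-m)`, `b = (2 + α) / 2`,
`m = (N - 2) / (2 + α)`. Since `y ↦ ‖y‖ ^ 2` is smooth with Hessian `2 I`, the chain rule gives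
`ΔU x = 2 N g'(s) + 4 s g''(s)` at `s = ‖x‖ ^ 2`, and for these exponents and `C = Cα` a direct
computation turns this into `-s ^ (b - 1) g(s) ^ (1 + 2 / m) = -‖x‖ ^ α U(x) ^ pα`.
At the origin `g'` is merely continuous (`g''` blows up when `α < 2`), but `g'(0) = 0`, so the
Hessian of `U` at `0` is `2 g'(0) I = 0`.
-/

open Set

/-- The Laplacian of `f : ℝ^N → ℝ`, as the sum of pure second derivatives. -/
noncomputable def lap {N : ℕ} (f : EuclideanSpace ℝ (Fin N) → ℝ)
    (x : EuclideanSpace ℝ (Fin N)) : ℝ :=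
  ∑ i, iteratedFDeriv ℝ 2 f x ![EuclideanSpace.single i 1, EuclideanSpace.single i 1]

open Filter Topology Asymptotics

section
variable {𝕜 E F : Type*} [NontriviallyNormedField 𝕜] [NormedAddCommGroup E] [NormedSpace 𝕜 E]
  [NormedAddCommGroup F] [NormedSpace 𝕜 F]

theorem hasFDerivAt_smul_clm_apply_zero {φ : E → 𝕜} (hφ : ContinuousAt φ 0) (A : E →L[𝕜] F) :
    HasFDerivAt (fun y => φ y • A y) (φ 0 • A) 0 := by
  rw [hasFDerivAt_iff_isLittleO_nhds_zero]
  have hφ' : (fun h => φ h - φ 0) =o[𝓝 0] (fun _ => (1 : 𝕜)) :=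
    isLittleO_one_iff 𝕜 |>.mpr (by simpa using hφ.sub_const (φ 0))
  simpa [sub_smul] using hφ'.smul_isBigO (A.isBigO_id (𝓝 0))
end

section
variable {E : Type*} [NormedAddCommGroup E] [InnerProductSpace ℝ E]

theorem hasFDerivAt_comp_norm_sq {g : ℝ → ℝ} {g' : ℝ} {x : E} (hg : HasDerivAt g g' (‖x‖ ^ 2)) :
    HasFDerivAt (fun y => g (‖y‖ ^ 2)) (g' • (2 : ℝ) • innerSL ℝ x) x := by
  have h := (hasStrictFDerivAt_norm_sq x).hasFDerivAt
  rw [← Nat.cast_smul_eq_nsmul ℝ, Nat.cast_ofNat] at h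
  exact hg.comp_hasFDerivAt x h

theorem fderiv_comp_norm_sq {g g' : ℝ → ℝ} (hg : ∀ t, 0 ≤ t → HasDerivAt g (g' t) t) :
    fderiv ℝ (fun y : E => g (‖y‖ ^ 2)) = fun y => g' (‖y‖ ^ 2) • (2 : ℝ) • innerSL ℝ y :=
  funext fun y => (hasFDerivAt_comp_norm_sq (hg _ (by positivity))).fderiv

theorem fderiv_comp_norm_sq_apply {g g' : ℝ → ℝ} (hg : ∀ t, 0 ≤ t → HasDerivAt g (g' t) t)
    (v : E) : (fun y => fderiv ℝ (fun y : E => g (‖y‖ ^ 2)) y v)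
      = fun y => g' (‖y‖ ^ 2) * (2 * inner ℝ v y) := by
  simp [fderiv_comp_norm_sq hg, real_inner_comm]

theorem hasFDerivAt_fderiv_comp_norm_sq_apply {g g' : ℝ → ℝ} {g'' : ℝ} {x : E}
    (hg : ∀ t, 0 ≤ t → HasDerivAt g (g' t) t) (hg' : HasDerivAt g' g'' (‖x‖ ^ 2)) (v : E) :
    HasFDerivAt (fun y => fderiv ℝ (fun y : E => g (‖y‖ ^ 2)) y v)
      (g' (‖x‖ ^ 2) • (2 : ℝ) • innerSL ℝ v + (2 * inner ℝ v x) • g'' • (2 : ℝ) • innerSL ℝ x)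
      x := by
  rw [fderiv_comp_norm_sq_apply hg]
  exact (hasFDerivAt_comp_norm_sq hg').mul (((innerSL ℝ v).hasFDerivAt).const_mul 2)

theorem hasFDerivAt_fderiv_comp_norm_sq_apply_zero {g g' : ℝ → ℝ}
    (hg : ∀ t, 0 ≤ t → HasDerivAt g (g' t) t) (hg' : ContinuousAt g' 0) (v : E) :
    HasFDerivAt (fun y => fderiv ℝ (fun y : E => g (‖y‖ ^ 2)) y v)
      (g' 0 • (2 : ℝ) • innerSL ℝ v) 0 := by
  have hφ : ContinuousAt (fun y : E => g' (‖y‖ ^ 2)) 0 :=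
    hg'.comp_of_eq (by fun_prop) (by simp)
  rw [fderiv_comp_norm_sq_apply hg]
  simpa using hasFDerivAt_smul_clm_apply_zero hφ ((2 : ℝ) • innerSL ℝ v)

theorem differentiableAt_fderiv_comp_norm_sq {g g' : ℝ → ℝ} {g'' : ℝ} {x : E}
    (hg : ∀ t, 0 ≤ t → HasDerivAt g (g' t) t) (hg' : HasDerivAt g' g'' (‖x‖ ^ 2)) :
    DifferentiableAt ℝ (fderiv ℝ fun y : E => g (‖y‖ ^ 2)) x := by
  rw [fderiv_comp_norm_sq hg]
  exact ((hasFDerivAt_comp_norm_sq hg').smul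
    (((innerSL ℝ).hasFDerivAt (x := x)).const_smul (2 : ℝ))).differentiableAt

theorem differentiableAt_fderiv_comp_norm_sq_zero {g g' : ℝ → ℝ}
    (hg : ∀ t, 0 ≤ t → HasDerivAt g (g' t) t) (hg' : ContinuousAt g' 0) :
    DifferentiableAt ℝ (fderiv ℝ fun y : E => g (‖y‖ ^ 2)) 0 := by
  have hφ : ContinuousAt (fun y : E => g' (‖y‖ ^ 2)) 0 :=
    hg'.comp_of_eq (by fun_prop) (by simp)
  rw [fderiv_comp_norm_sq hg]
  exact (hasFDerivAt_smul_clm_apply_zero hφ ((2 : ℝ) • innerSL ℝ)).differentiableAt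
end

theorem lap_eq_sum_of_hasFDerivAt {N : ℕ} {f : EuclideanSpace ℝ (Fin N) → ℝ}
    {x : EuclideanSpace ℝ (Fin N)} (hf : DifferentiableAt ℝ (fderiv ℝ f) x)
    {D : Fin N → EuclideanSpace ℝ (Fin N) →L[ℝ] ℝ}
    (hD : ∀ i, HasFDerivAt (fun y => fderiv ℝ f y (EuclideanSpace.single i 1)) (D i) x) :
    lap f x = ∑ i, D i (EuclideanSpace.single i 1) := by
  refine Finset.sum_congr rfl fun i _ => ?_
  rw [iteratedFDeriv_two_apply,
    ← (hf.hasFDerivAt.clm_apply (hasFDerivAt_const _ x)).unique (hD i)]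
  simp

theorem lap_comp_norm_sq {N : ℕ} {g g' : ℝ → ℝ} {g'' : ℝ} {x : EuclideanSpace ℝ (Fin N)}
    (hg : ∀ t, 0 ≤ t → HasDerivAt g (g' t) t) (hg' : HasDerivAt g' g'' (‖x‖ ^ 2)) :
    lap (fun y => g (‖y‖ ^ 2)) x = 2 * N * g' (‖x‖ ^ 2) + 4 * ‖x‖ ^ 2 * g'' := by
  rw [lap_eq_sum_of_hasFDerivAt (differentiableAt_fderiv_comp_norm_sq hg hg')
    fun i => hasFDerivAt_fderiv_comp_norm_sq_apply hg hg' _]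
  have hsum : ∑ i, 2 * x i * (g'' * (2 * x i)) = 4 * ‖x‖ ^ 2 * g'' := by
    rw [EuclideanSpace.real_norm_sq_eq, Finset.mul_sum, Finset.sum_mul]
    exact Finset.sum_congr rfl fun _ _ => by ring
  simp only [EuclideanSpace.inner_single_left, Real.ringHom_apply, one_mul, add_apply, smul_apply,
    coe_innerSL_apply, inner_self_eq_norm_sq_to_K, PiLp.norm_single, norm_one, one_pow, smul_eq_mul,
    mul_one, EuclideanSpace.inner_single_right, Finset.sum_add_distrib, Finset.sum_const,
    Finset.card_univ, Fintype.card_fin, nsmul_eq_mul, hsum]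
  ring

theorem lap_comp_norm_sq_zero {N : ℕ} {g g' : ℝ → ℝ}
    (hg : ∀ t, 0 ≤ t → HasDerivAt g (g' t) t) (hg' : ContinuousAt g' 0) :
    lap (fun y : EuclideanSpace ℝ (Fin N) => g (‖y‖ ^ 2)) 0 = 2 * N * g' 0 := by
  rw [lap_eq_sum_of_hasFDerivAt (differentiableAt_fderiv_comp_norm_sq_zero hg hg')
    fun i => hasFDerivAt_fderiv_comp_norm_sq_apply_zero hg hg' _]
  simp only [smul_apply, coe_innerSL_apply, inner_self_eq_norm_sq_to_K, PiLp.norm_single, norm_one,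
    Real.ringHom_apply, one_pow, smul_eq_mul, mul_one, Finset.sum_const, Finset.card_univ,
    Fintype.card_fin, nsmul_eq_mul]
  ring

noncomputable def henonProfile (C m b t : ℝ) : ℝ := (1 + C * t ^ b) ^ (-m)

noncomputable def henonProfileDeriv (C m b t : ℝ) : ℝ :=
  -(m * C * b) * (t ^ (b - 1) * (1 + C * t ^ b) ^ (-m - 1))

noncomputable def henonProfileDeriv2 (C m b t : ℝ) : ℝ :=
  -(m * C * b) * ((b - 1) * t ^ (b - 2) * (1 + C * t ^ b) ^ (-m - 1)
    + t ^ (b - 1) * (C * (b * t ^ (b - 1)) * (-m - 1) * (1 + C * t ^ b) ^ (-m - 2)))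

section
variable {C m b t : ℝ}

theorem one_le_one_add_mul_rpow (hC : 0 ≤ C) (ht : 0 ≤ t) : 1 ≤ 1 + C * t ^ b :=
  le_add_of_nonneg_right (mul_nonneg hC (Real.rpow_nonneg ht b))

theorem hasDerivAt_one_add_mul_rpow (hb : 1 ≤ b) :
    HasDerivAt (fun t => 1 + C * t ^ b) (C * (b * t ^ (b - 1))) t :=
  ((Real.hasDerivAt_rpow_const (Or.inr hb)).const_mul C).const_add 1

theorem hasDerivAt_henonProfile (hC : 0 ≤ C) (hb : 1 ≤ b) (ht : 0 ≤ t) :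
    HasDerivAt (henonProfile C m b) (henonProfileDeriv C m b t) t := by
  have hW := (one_le_one_add_mul_rpow (b := b) hC ht).trans_lt' one_pos
  refine ((hasDerivAt_one_add_mul_rpow hb).rpow_const (p := -m) (Or.inl hW.ne')).congr_deriv ?_
  rw [henonProfileDeriv]
  ring

theorem hasDerivAt_henonProfileDeriv (hC : 0 ≤ C) (hb : 1 ≤ b) (ht : 0 < t) :
    HasDerivAt (henonProfileDeriv C m b) (henonProfileDeriv2 C m b t) t := by
  have hW := (one_le_one_add_mul_rpow (b := b) hC ht.le).trans_lt' one_pos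
  have h := (((Real.hasDerivAt_rpow_const (p := b - 1) (Or.inl ht.ne')).mul
    ((hasDerivAt_one_add_mul_rpow hb).rpow_const (p := -m - 1) (Or.inl hW.ne'))).const_mul
    (-(m * C * b)))
  refine h.congr_deriv ?_
  rw [henonProfileDeriv2, show b - 1 - 1 = b - 2 by ring, show -m - 1 - 1 = -m - 2 by ring]

theorem henonProfileDeriv_zero (hb : 1 < b) : henonProfileDeriv C m b 0 = 0 := by
  simp [henonProfileDeriv, Real.zero_rpow (sub_pos.2 hb).ne']

theorem continuousAt_henonProfileDeriv_zero (hb : 1 < b) :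
    ContinuousAt (henonProfileDeriv C m b) 0 := by
  have h0 : (0 : ℝ) ^ b = 0 := Real.zero_rpow (by linarith)
  refine ((Real.continuousAt_rpow_const 0 (b - 1) (Or.inr (by linarith))).mul ?_).const_mul _
  exact ((Real.continuousAt_rpow_const 0 b (Or.inr (by linarith))).const_mul C
    |>.const_add 1).rpow_const (Or.inl (by simp [h0]))

theorem henonProfile_pos (hC : 0 ≤ C) (ht : 0 ≤ t) : 0 < henonProfile C m b t :=
  Real.rpow_pos_of_pos ((one_le_one_add_mul_rpow hC ht).trans_lt' one_pos) _

theorem henonProfile_le_one (hC : 0 ≤ C) (hm : 0 ≤ m) (ht : 0 ≤ t) :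
    henonProfile C m b t ≤ 1 :=
  Real.rpow_le_one_of_one_le_of_nonpos (one_le_one_add_mul_rpow hC ht) (neg_nonpos.2 hm)

theorem henonProfile_rpow (hC : 0 ≤ C) (ht : 0 ≤ t) (p : ℝ) :
    henonProfile C m b t ^ p = (1 + C * t ^ b) ^ (-m * p) :=
  (Real.rpow_mul (zero_le_one.trans (one_le_one_add_mul_rpow hC ht)) _ _).symm

/- Both sides carry the factor `s ^ (b - 1) (1 + C s ^ b) ^ (-m - 2)`; what remains on the left is
`m C b ((2n + 4b - 4) + (2n + 4b - 4 - 4 (m + 1) b) C s ^ b)`, and `hmb`, `hCmb` make it `1`. -/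
theorem henonProfile_ode {n s : ℝ} (hC : 0 ≤ C) (hs : 0 < s)
    (hmb : (m + 1) * b = n / 2 + b - 1) (hCmb : 2 * m * C * b * (n + 2 * b - 2) = 1) :
    -(2 * n * henonProfileDeriv C m b s + 4 * s * henonProfileDeriv2 C m b s)
      = s ^ (b - 1) * (1 + C * s ^ b) ^ (-m - 2) := by
  have hW := (one_le_one_add_mul_rpow (b := b) hC hs.le).trans_lt' one_pos
  have hT : s ^ (b - 2) * s = s ^ (b - 1) := by
    rw [← Real.rpow_add_one hs.ne']; ring_nf
  have hS : s ^ b = s ^ (b - 1) * s := by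
    rw [← Real.rpow_add_one hs.ne']; ring_nf
  have hW1 : (1 + C * s ^ b) ^ (-m - 1) = (1 + C * s ^ b) ^ (-m - 2) * (1 + C * s ^ b) := by
    rw [← Real.rpow_add_one hW.ne']; ring_nf
  simp only [henonProfileDeriv, henonProfileDeriv2, hW1]
  generalize (1 + C * s ^ b) ^ (-m - 2) = V
  rw [hS] at *
  linear_combination (s ^ (b - 1) * V) * hCmb
    - 4 * m * C * b * C * (s ^ (b - 1)) ^ 2 * s * V * hmb
    + 4 * m * C * b * (b - 1) * V * (1 + C * s ^ (b - 1) * s) * hT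
end

theorem stmt_3 (N : ℕ) (hN : 3 ≤ N) (α : ℝ) (hα : 0 < α) :
    let pα : ℝ := ((N : ℝ) + 2 + 2 * α) / ((N : ℝ) - 2)
    let Cα : ℝ := 1 / (((N : ℝ) - 2) * ((N : ℝ) + α))
    let U : EuclideanSpace ℝ (Fin N) → ℝ :=
      fun x => (1 + Cα * ‖x‖ ^ (2 + α)) ^ (-((N : ℝ) - 2) / (2 + α))
    (∀ x, -(lap U x) = ‖x‖ ^ α * U x ^ pα) ∧ U 0 = 1 ∧ ∀ x, 0 < U x ∧ U x ≤ 1 := by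
  intro pα Cα U
  have hN' : (3 : ℝ) ≤ N := by exact_mod_cast hN
  have hN2 : (N : ℝ) - 2 ≠ 0 := by linarith
  set m := ((N : ℝ) - 2) / (2 + α) with hm
  set b := (2 + α) / 2 with hb
  have hC : 0 ≤ Cα := div_nonneg zero_le_one (mul_nonneg (by linarith) (by linarith))
  have hb1 : 1 < b := by linarith
  have hsq : ∀ t c : ℝ, 0 ≤ t → (t ^ 2) ^ (c / 2) = t ^ c := fun t c ht => by
    rw [← Real.rpow_natCast_mul ht]; congr 1; push_cast; ring
  have hU : U = fun y => henonProfile Cα m b (‖y‖ ^ 2) := funext fun y => by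
    simp only [U, henonProfile, hb, hsq _ _ (norm_nonneg y), hm, neg_div]
  have hg : ∀ t, 0 ≤ t → HasDerivAt (henonProfile Cα m b) (henonProfileDeriv Cα m b t) t :=
    fun t ht => hasDerivAt_henonProfile hC hb1.le ht
  refine ⟨fun x => ?_, ?_, fun x => ?_⟩
  · rcases eq_or_ne x 0 with rfl | hx
    · rw [hU, lap_comp_norm_sq_zero hg (continuousAt_henonProfileDeriv_zero hb1),
        henonProfileDeriv_zero hb1]
      simp [Real.zero_rpow hα.ne']
    · have hs : 0 < ‖x‖ ^ 2 := by positivity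
      have hmb : (m + 1) * b = N / 2 + b - 1 := by
        rw [hm, hb]; field_simp; ring
      have hCmb : 2 * m * Cα * b * (N + 2 * b - 2) = 1 := by
        simp only [hm, hb, Cα]; field_simp; ring
      rw [hU, lap_comp_norm_sq hg (hasDerivAt_henonProfileDeriv hC hb1.le hs),
        henonProfile_ode hC hs hmb hCmb, show b - 1 = α / 2 by rw [hb]; ring,
        hsq _ _ (norm_nonneg x), henonProfile_rpow hC hs.le]
      congr 2
      simp only [hm, pα]
      field_simp
      ring
  · simp [U, Real.zero_rpow (by linarith : 2 + α ≠ 0)]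
  · rw [hU]
    exact ⟨henonProfile_pos hC (by positivity),
      henonProfile_le_one hC (div_nonneg (by linarith) (by linarith)) (by positivity)⟩
end

section
/- Let u be the positive radial solution of -(r^{N-1}u')' = r^{N-1+α}u^p on (0,1) with u'(0)=0, u(1)=0, and 0 < α. Define g(r) = r^{1+α} u(r)^p / ((N+α)(-u'(r))). Then at every interior critical point r̂ ∈ (0,1) of g one has g(r̂) = 1 - p r̂ (-u'(r̂)) / ((N+α) u(r̂)) < 1; consequently 0 < g(r) < 1 for all r ∈ (0,1). -/
/-!
Write `F(r) = r^(N-1) u'(r)`. The equation says `F' = -r^(N-1+α) u^p < 0` and `F(0) = 0`, so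
`u' < 0` on `(0, 1)`. The Pohozaev-type function
`φ(r) = (N+α)(-r^(N-1) u'(r)) - r^(N+α) u(r)^p` vanishes at `0` and has
`φ' = -p r^(N+α) u^(p-1) u' > 0`, so `φ > 0` on `(0, 1)`, which is exactly `g < 1`.
Using the equation to eliminate `u''`, one finds
`g' = -((N+α)/r) g (g - 1 + p r (-u') / ((N+α) u))`, so at a critical point the last factor vanishes.
-/

open Set

noncomputable def radialRatio (u : ℝ → ℝ) (n a p : ℝ) (r : ℝ) : ℝ :=
  r ^ (1 + a) * u r ^ p / ((n + a) * -deriv u r)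

section RadialSolution

variable {u : ℝ → ℝ} {n a p r : ℝ}

theorem continuous_rpow_mul_deriv (hu : Continuous (deriv u)) (hn : 1 < n) :
    Continuous (fun s => s ^ (n - 1) * deriv u s) :=
  (continuous_id.rpow_const fun _ => Or.inr (by linarith)).mul hu

theorem deriv_neg_of_radial (hu : Continuous (deriv u)) (hn : 1 < n)
    (hODE : ∀ r ∈ Ioo (0:ℝ) 1,
      deriv (fun s => s ^ (n - 1) * deriv u s) r = -(r ^ (n - 1 + a) * u r ^ p))
    (hpos : ∀ r ∈ Ioo (0:ℝ) 1, 0 < u r) (hr : r ∈ Ioo (0:ℝ) 1) :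
    deriv u r < 0 := by
  have hanti : StrictAntiOn (fun s => s ^ (n - 1) * deriv u s) (Icc 0 1) := by
    refine strictAntiOn_of_deriv_neg (convex_Icc 0 1)
      (continuous_rpow_mul_deriv hu hn).continuousOn fun s hs => ?_
    rw [interior_Icc] at hs
    rw [hODE s hs, neg_neg_iff_pos]
    exact mul_pos (Real.rpow_pos_of_pos hs.1 _) (Real.rpow_pos_of_pos (hpos s hs) _)
  have hneg := hanti (left_mem_Icc.2 zero_le_one) (Ioo_subset_Icc_self hr) hr.1
  simp only [Real.zero_rpow (by linarith : n - 1 ≠ 0), zero_mul] at hneg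
  exact neg_of_mul_neg_right hneg (Real.rpow_nonneg hr.1.le _)

theorem radial_ode_expand (hu : ContDiff ℝ 2 u)
    (hODE : ∀ r ∈ Ioo (0:ℝ) 1,
      deriv (fun s => s ^ (n - 1) * deriv u s) r = -(r ^ (n - 1 + a) * u r ^ p))
    (hr : r ∈ Ioo (0:ℝ) 1) :
    r * deriv (deriv u) r + (n - 1) * deriv u r = -(r ^ (1 + a) * u r ^ p) := by
  have hF : HasDerivAt (fun s => s ^ (n - 1) * deriv u s)
      ((n - 1) * r ^ (n - 1 - 1) * deriv u r + r ^ (n - 1) * deriv (deriv u) r) r :=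
    (Real.hasDerivAt_rpow_const (Or.inl hr.1.ne')).mul
      (hu.differentiable_deriv_two r).hasDerivAt
  have h := hF.deriv ▸ hODE r hr
  rw [Real.rpow_sub_one hr.1.ne', Real.rpow_add hr.1] at h
  rw [Real.rpow_add hr.1, Real.rpow_one]
  have hr0 : r ≠ 0 := hr.1.ne'
  have hq : r ^ (n - 1) ≠ 0 := (Real.rpow_pos_of_pos hr.1 _).ne'
  field_simp at h
  linear_combination h

theorem strictMonoOn_pohozaev (hu : ContDiff ℝ 2 u) (hn : 1 < n) (hna : 0 < n + a)
    (hp : 0 < p)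
    (hODE : ∀ r ∈ Ioo (0:ℝ) 1,
      deriv (fun s => s ^ (n - 1) * deriv u s) r = -(r ^ (n - 1 + a) * u r ^ p))
    (hpos : ∀ r ∈ Ioo (0:ℝ) 1, 0 < u r) :
    StrictMonoOn (fun s => (n + a) * -(s ^ (n - 1) * deriv u s) - s ^ (n + a) * u s ^ p)
      (Icc 0 1) := by
  have hcont :
      Continuous (fun s => (n + a) * -(s ^ (n - 1) * deriv u s) - s ^ (n + a) * u s ^ p) :=
    ((continuous_rpow_mul_deriv (hu.continuous_deriv one_le_two) hn).neg.const_mul _).sub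
      ((continuous_id.rpow_const fun _ => Or.inr hna.le).mul
        (hu.continuous.rpow_const fun _ => Or.inr hp.le))
  refine strictMonoOn_of_deriv_pos (convex_Icc 0 1) hcont.continuousOn fun s hs => ?_
  rw [interior_Icc] at hs
  have hF : HasDerivAt (fun s => s ^ (n - 1) * deriv u s) (-(s ^ (n - 1 + a) * u s ^ p)) s :=
    hODE s hs ▸ ((Real.differentiableAt_rpow_const_of_ne _ hs.1.ne').mul
      (hu.differentiable_deriv_two s)).hasDerivAt
  have hG : HasDerivAt (fun s => s ^ (n + a) * u s ^ p)
      ((n + a) * s ^ (n + a - 1) * u s ^ p + s ^ (n + a) * (deriv u s * p * u s ^ (p - 1))) s :=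
    (Real.hasDerivAt_rpow_const (Or.inl hs.1.ne')).mul
      (((hu.differentiable (by norm_num)) s).hasDerivAt.rpow_const (Or.inl (hpos s hs).ne'))
  have hφ : HasDerivAt
      (fun s => (n + a) * -(s ^ (n - 1) * deriv u s) - s ^ (n + a) * u s ^ p)
      (-p * s ^ (n + a) * u s ^ (p - 1) * deriv u s) s := by
    refine ((hF.neg.const_mul (n + a)).sub hG).congr_deriv ?_
    rw [show n + a - 1 = n - 1 + a by ring]
    ring
  rw [hφ.deriv]
  have hdec := deriv_neg_of_radial (hu.continuous_deriv one_le_two) hn hODE hpos hs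
  have := mul_pos (mul_pos (Real.rpow_pos_of_pos hs.1 (n + a))
    (Real.rpow_pos_of_pos (hpos s hs) (p - 1))) (mul_pos hp (neg_pos.2 hdec))
  linarith

theorem rpow_mul_rpow_lt_of_radial (hu : ContDiff ℝ 2 u) (hn : 1 < n) (hna : 0 < n + a)
    (hp : 0 < p)
    (hODE : ∀ r ∈ Ioo (0:ℝ) 1,
      deriv (fun s => s ^ (n - 1) * deriv u s) r = -(r ^ (n - 1 + a) * u r ^ p))
    (hpos : ∀ r ∈ Ioo (0:ℝ) 1, 0 < u r) (hr : r ∈ Ioo (0:ℝ) 1) :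
    r ^ (1 + a) * u r ^ p < (n + a) * -deriv u r := by
  have hlt := strictMonoOn_pohozaev hu hn hna hp hODE hpos (left_mem_Icc.2 zero_le_one)
    (Ioo_subset_Icc_self hr) hr.1
  simp only [Real.zero_rpow (by linarith : n - 1 ≠ 0), Real.zero_rpow hna.ne', zero_mul,
    neg_zero, mul_zero, sub_zero] at hlt
  have hsplit : r ^ (n + a) = r ^ (n - 1) * r ^ (1 + a) := by
    rw [← Real.rpow_add hr.1]; ring_nf
  rw [hsplit] at hlt
  have hq : 0 < r ^ (n - 1) := Real.rpow_pos_of_pos hr.1 _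
  nlinarith

theorem radialRatio_pos (hr : 0 < r) (hur : 0 < u r) (hdec : deriv u r < 0)
    (hna : 0 < n + a) : 0 < radialRatio u n a p r :=
  div_pos (mul_pos (Real.rpow_pos_of_pos hr _) (Real.rpow_pos_of_pos hur _))
    (mul_pos hna (neg_pos.2 hdec))

theorem hasDerivAt_radialRatio (hu : DifferentiableAt ℝ u r)
    (hu' : DifferentiableAt ℝ (deriv u) r) (hr : r ≠ 0) (hur : u r ≠ 0)
    (hdec : deriv u r ≠ 0) (hna : n + a ≠ 0)
    (hode : r * deriv (deriv u) r + (n - 1) * deriv u r = -(r ^ (1 + a) * u r ^ p)) :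
    HasDerivAt (radialRatio u n a p) (-((n + a) / r) * radialRatio u n a p r *
      (radialRatio u n a p r - 1 + p * r * -deriv u r / ((n + a) * u r))) r := by
  have hA : HasDerivAt (fun s => s ^ (1 + a) * u s ^ p)
      ((1 + a) * r ^ (1 + a - 1) * u r ^ p + r ^ (1 + a) * (deriv u r * p * u r ^ (p - 1))) r :=
    (Real.hasDerivAt_rpow_const (Or.inl hr)).mul (hu.hasDerivAt.rpow_const (Or.inl hur))
  have hB : HasDerivAt (fun s => (n + a) * -deriv u s) ((n + a) * -deriv (deriv u) r) r :=
    hu'.hasDerivAt.neg.const_mul _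
  refine (hA.div hB (mul_ne_zero hna (neg_ne_zero.2 hdec))).congr_deriv ?_
  rw [Real.rpow_sub_one hr, Real.rpow_sub_one hur]
  unfold radialRatio
  field_simp
  linear_combination r ^ (1 + a) * u r ^ p * u r * hode

theorem radialRatio_eq_of_deriv_eq_zero (hu : DifferentiableAt ℝ u r)
    (hu' : DifferentiableAt ℝ (deriv u) r) (hr : 0 < r) (hur : 0 < u r)
    (hdec : deriv u r < 0) (hna : 0 < n + a)
    (hode : r * deriv (deriv u) r + (n - 1) * deriv u r = -(r ^ (1 + a) * u r ^ p))
    (hcrit : deriv (radialRatio u n a p) r = 0) :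
    radialRatio u n a p r = 1 - p * r * -deriv u r / ((n + a) * u r) := by
  rw [(hasDerivAt_radialRatio hu hu' hr.ne' hur.ne' hdec.ne hna.ne' hode).deriv] at hcrit
  have hfactor : -((n + a) / r) * radialRatio u n a p r ≠ 0 :=
    mul_ne_zero (neg_ne_zero.2 (div_pos hna hr).ne') (radialRatio_pos hr hur hdec hna).ne'
  linarith [(mul_eq_zero.1 hcrit).resolve_left hfactor]

end RadialSolution

theorem stmt_8_general (N : ℕ) (hN : 3 ≤ N) (α p : ℝ) (hα : 0 < α) (hp : 1 < p)
    (u : ℝ → ℝ) (hu : ContDiff ℝ 2 u)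
    (hODE : ∀ r ∈ Ioo (0:ℝ) 1,
      deriv (fun s => s ^ ((N:ℝ) - 1) * deriv u s) r = -(r ^ ((N:ℝ) - 1 + α) * u r ^ p))
    (hupos : ∀ r ∈ Ico (0:ℝ) 1, 0 < u r) :
    let g : ℝ → ℝ := fun r => r ^ (1 + α) * u r ^ p / (((N : ℝ) + α) * (-(deriv u r)))
    (∀ r ∈ Ioo (0:ℝ) 1, deriv g r = 0 →
      g r = 1 - p * r * (-(deriv u r)) / (((N : ℝ) + α) * u r) ∧ g r < 1) ∧
    ∀ r ∈ Ioo (0:ℝ) 1, 0 < g r ∧ g r < 1 := by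
  intro g
  have hn : (1:ℝ) < N := by exact_mod_cast (by omega : 1 < N)
  have hna : 0 < (N:ℝ) + α := by linarith
  have hpos : ∀ r ∈ Ioo (0:ℝ) 1, 0 < u r := fun r hr => hupos r (Ioo_subset_Ico_self hr)
  have hdec : ∀ r ∈ Ioo (0:ℝ) 1, deriv u r < 0 := fun r hr =>
    deriv_neg_of_radial (hu.continuous_deriv one_le_two) hn hODE hpos hr
  have hlt : ∀ r ∈ Ioo (0:ℝ) 1, g r < 1 := fun r hr =>
    (div_lt_one (mul_pos hna (neg_pos.2 (hdec r hr)))).2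
      (rpow_mul_rpow_lt_of_radial hu hn hna (by linarith) hODE hpos hr)
  refine ⟨fun r hr hcrit => ⟨?_, hlt r hr⟩,
    fun r hr => ⟨radialRatio_pos hr.1 (hpos r hr) (hdec r hr) hna, hlt r hr⟩⟩
  exact radialRatio_eq_of_deriv_eq_zero (hu.differentiable (by norm_num) r)
    (hu.differentiable_deriv_two r) hr.1 (hpos r hr) (hdec r hr) hna
    (radial_ode_expand hu hODE hr) hcrit

theorem stmt_8 (N : ℕ) (hN : 3 ≤ N) (α p : ℝ) (hα : 0 < α) (hp : 1 < p)
    (hpα : p < ((N : ℝ) + 2 + 2 * α) / ((N : ℝ) - 2))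
    (u : ℝ → ℝ) (hu : ContDiff ℝ 2 u)
    (hODE : ∀ r ∈ Ioo (0:ℝ) 1,
      deriv (fun s => s ^ ((N:ℝ) - 1) * deriv u s) r = -(r ^ ((N:ℝ) - 1 + α) * u r ^ p))
    (hu'0 : deriv u 0 = 0) (hu1 : u 1 = 0)
    (hupos : ∀ r ∈ Ico (0:ℝ) 1, 0 < u r) :
    let g : ℝ → ℝ := fun r => r ^ (1 + α) * u r ^ p / (((N : ℝ) + α) * (-(deriv u r)))
    (∀ r ∈ Ioo (0:ℝ) 1, deriv g r = 0 →
      g r = 1 - p * r * (-(deriv u r)) / (((N : ℝ) + α) * u r) ∧ g r < 1) ∧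
    ∀ r ∈ Ioo (0:ℝ) 1, 0 < g r ∧ g r < 1 :=
  stmt_8_general N hN α p hα hp u hu hODE hupos
end

section
/- Let u_p be the positive radial solution of -Δu = |x|^α u^p in the unit ball B ⊂ ℝ^N with Dirichlet boundary conditions, N ≥ 3, α > 0, 1 < p < (N+2+2α)/(N-2). Then for every radial function v ∈ H¹₀(B), written in radial coordinates, the inequality ∫₀¹ r^{N-1}(v')² dr - p∫₀¹ r^{N-1+α} u_p^{p-1} v² dr + (p-1) (∫₀¹ r^{N-1+α} u_p^p v dr)² / ∫₀¹ r^{N-1+α} u_p^{p+1} dr ≥ 0. -/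
/-
The scaling `u_λ(r) = λ^γ u(λ r)`, `γ = (2 + α)/(p - 1)`, yields the zero mode `w = γ u + r u'` of
the linearised operator `L = -(r^{N-1} ·')' - p r^{N-1+α} u^{p-1}`. It is positive at `0` and equals
`u'(1) < 0` at `1`. Writing `w = u (γ - T)` with `T = -r u'/u`, one shows `T' > 0` with the barrier
`B = r^{2+α} u^{p-1} - (p+1)/2 · T (N - 2 - T)`, which is positive near `0` and has positive
derivative at each of its zeros, both by subcriticality; so `w` has exactly one zero `r₀`, and it is
simple. Picone's identity with `w` then gives `Q(g) ≥ 0` for the quadratic form `Q` of `L` whenever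
`g(r₀) = g(1) = 0`. For general `v` take `g = v + t u` with `g(r₀) = 0`: by the Euler–Lagrange
equation `Q(g) = Q(v) - (p - 1)(2 t C + t² M)`, and completing the square in `t` gives the claim.
-/

open Set Filter Topology intervalIntegral

theorem le_of_hasDerivAt_nonneg {f f' : ℝ → ℝ} {a b : ℝ} (hab : a ≤ b)
    (hf : ContinuousOn f (Icc a b)) (hf' : ∀ x ∈ Ioo a b, HasDerivAt f (f' x) x)
    (hf'_nonneg : ∀ x ∈ Ioo a b, 0 ≤ f' x) : f a ≤ f b := by
  refine monotoneOn_of_hasDerivWithinAt_nonneg (f' := f') (convex_Icc a b) hf ?_ ?_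
    (left_mem_Icc.2 hab) (right_mem_Icc.2 hab) hab
  · rw [interior_Icc]
    exact fun x hx => (hf' x hx).hasDerivWithinAt
  · rwa [interior_Icc]

theorem eventually_neg_left_of_hasDerivAt_pos {f : ℝ → ℝ} {x d : ℝ} (hf : HasDerivAt f d x)
    (hfx : f x = 0) (hd : 0 < d) : ∀ᶠ y in 𝓝[<] x, f y < 0 := by
  have hslope := (hasDerivAt_iff_tendsto_slope.1 hf).mono_left
    (nhdsWithin_mono x fun y (hy : y < x) => hy.ne)
  filter_upwards [hslope.eventually (lt_mem_nhds hd), self_mem_nhdsWithin] with y hy hyx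
  rw [slope_def_field, hfx, sub_zero] at hy
  have := mul_neg_of_pos_of_neg hy (sub_neg.2 hyx)
  rwa [div_mul_cancel₀ _ (sub_neg.2 hyx).ne] at this

theorem pos_of_hasDerivAt_pos_of_eq_zero {f : ℝ → ℝ} {a b : ℝ} (hf : ContinuousOn f (Ioo a b))
    (h_near : ∀ᶠ x in 𝓝[>] a, 0 < f x)
    (h_zero : ∀ x ∈ Ioo a b, f x = 0 → ∃ d, 0 < d ∧ HasDerivAt f d x) :
    ∀ x ∈ Ioo a b, 0 < f x := by
  intro x₁ hx₁
  by_contra! hfx₁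
  obtain ⟨c, hfc, hc⟩ := (h_near.and (Ioo_mem_nhdsGT hx₁.1)).exists
  have hsub : Icc c x₁ ⊆ Ioo a b := Icc_subset_Ioo hc.1 hx₁.2
  -- The first point `z` of `[c, x₁]` with `f z ≤ 0` is a zero, but `f > 0` just left of it.
  set S := Icc c x₁ ∩ f ⁻¹' Iic 0
  have hS : IsClosed S := (hf.mono hsub).preimage_isClosed_of_isClosed isClosed_Icc isClosed_Iic
  have hSbdd : BddBelow S := ⟨c, fun y hy => hy.1.1⟩
  have hzS : sInf S ∈ S := hS.csInf_mem ⟨x₁, ⟨⟨hc.2.le, le_rfl⟩, hfx₁⟩⟩ hSbdd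
  set z := sInf S
  have hcz : c < z := hzS.1.1.lt_of_ne fun h => (h ▸ hzS.2 : f c ≤ 0).not_gt hfc
  have hleft : ∀ y ∈ Ico c z, 0 < f y := fun y hy => by
    by_contra! hfy
    exact absurd (csInf_le hSbdd ⟨⟨hy.1, hy.2.le.trans hzS.1.2⟩, hfy⟩) (not_le.2 hy.2)
  have hleft' : ∀ᶠ y in 𝓝[<] z, 0 < f y := by
    filter_upwards [Ioo_mem_nhdsLT hcz] with y hy using hleft y ⟨hy.1.le, hy.2⟩
  have hfz : f z = 0 := by
    refine le_antisymm hzS.2 (ge_of_tendsto ?_ (hleft'.mono fun y hy => hy.le))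
    exact ((hf.continuousAt (Ioo_mem_nhds (hsub hzS.1).1 (hsub hzS.1).2)).tendsto).mono_left
      nhdsWithin_le_nhds
  obtain ⟨d, hd, hfd⟩ := h_zero z (hsub hzS.1) hfz
  obtain ⟨y, hy1, hy2⟩ := ((eventually_neg_left_of_hasDerivAt_pos hfd hfz hd).and hleft').exists
  exact absurd hy2 (not_lt.2 hy1.le)

theorem continuousAt_sq_div_of_hasDerivAt {g w : ℝ → ℝ} {x₀ g' w' : ℝ}
    (hg : HasDerivAt g g' x₀) (hw : HasDerivAt w w' x₀) (hg₀ : g x₀ = 0) (hw₀ : w x₀ = 0)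
    (hw' : w' ≠ 0) : ContinuousAt (fun x => g x ^ 2 / w x) x₀ := by
  rw [← continuousWithinAt_compl_self, ContinuousWithinAt, hg₀, hw₀, div_zero]
  have hlin : Tendsto (fun x => x - x₀) (𝓝[≠] x₀) (𝓝 0) :=
    tendsto_sub_nhds_zero_iff.2 (tendsto_id.mono_left nhdsWithin_le_nhds)
  have hlim := (((hasDerivAt_iff_tendsto_slope.1 hg).pow 2).div
    (hasDerivAt_iff_tendsto_slope.1 hw) hw').mul hlin
  rw [mul_zero] at hlim
  refine hlim.congr' (eventually_nhdsWithin_of_forall fun x (hx : x ≠ x₀) => ?_)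
  have hx' : x - x₀ ≠ 0 := sub_ne_zero.2 hx
  simp only [Pi.div_apply, slope_def_field, hg₀, hw₀, sub_zero]
  by_cases hwx : w x = 0
  · simp [hwx]
  · field_simp

theorem hasDerivAt_picone {a q w g : ℝ → ℝ} {x w' g' : ℝ}
    (hZ : HasDerivAt (fun y => a y * deriv w y) (-(q x * w x)) x) (hw : HasDerivAt w w' x)
    (hg : HasDerivAt g g' x) (hwx : w x ≠ 0) :
    HasDerivAt (fun y => a y * deriv w y * (g y ^ 2 / w y))
      (a x * g' ^ 2 - q x * g x ^ 2 - a x * (g' - w' * g x / w x) ^ 2) x := by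
  refine (hZ.mul ((hg.pow 2).div hw hwx)).congr_deriv ?_
  rw [hw.deriv]
  simp only [Pi.div_apply, Pi.pow_apply]
  field_simp
  ring

theorem integral_nonneg_of_picone {a q w g : ℝ → ℝ} {r₀ : ℝ} (hr₀ : r₀ ∈ Ioo (0:ℝ) 1)
    (ha : Continuous a) (ha₀ : a 0 = 0) (ha_nonneg : ∀ x ∈ Ioo (0:ℝ) 1, 0 ≤ a x)
    (hq : Continuous q) (hw : ContDiff ℝ 1 w)
    (hZ : ∀ x ∈ Ioo (0:ℝ) 1, HasDerivAt (fun y => a y * deriv w y) (-(q x * w x)) x)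
    (hw_ne : ∀ x ∈ Icc (0:ℝ) 1, x ≠ r₀ → w x ≠ 0) (hwr₀ : w r₀ = 0) (hw'r₀ : deriv w r₀ ≠ 0)
    (hg : ContDiff ℝ 1 g) (hgr₀ : g r₀ = 0) (hg₁ : g 1 = 0) :
    0 ≤ ∫ x in (0:ℝ)..1, a x * deriv g x ^ 2 - q x * g x ^ 2 := by
  set P := fun x => a x * deriv g x ^ 2 - q x * g x ^ 2
  have hP : Continuous P :=
    (ha.mul ((hg.continuous_deriv le_rfl).pow 2)).sub (hq.mul (hg.continuous.pow 2))
  have hw' (x : ℝ) : HasDerivAt w (deriv w x) x := (hw.differentiable one_ne_zero x).hasDerivAt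
  have hg' (x : ℝ) : HasDerivAt g (deriv g x) x := (hg.differentiable one_ne_zero x).hasDerivAt
  -- At `r₀` the boundary term is `0 / 0 = 0`, which is its continuous extension.
  set F := fun x => (∫ t in (0:ℝ)..x, P t) - a x * deriv w x * (g x ^ 2 / w x)
  have hF_cont : ContinuousOn F (Icc 0 1) := by
    intro x hx
    refine ((hP.integral_hasStrictDerivAt 0 x).hasDerivAt.continuousAt.sub ?_).continuousWithinAt
    refine (ha.mul (hw.continuous_deriv le_rfl)).continuousAt.mul ?_
    by_cases hxr₀ : x = r₀
    · subst hxr₀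
      exact continuousAt_sq_div_of_hasDerivAt (hg' x) (hw' x) hgr₀ hwr₀ hw'r₀
    · exact (hg.continuous.pow 2).continuousAt.div hw.continuous.continuousAt (hw_ne x hx hxr₀)
  have hF_deriv : ∀ x ∈ Ioo (0:ℝ) 1, x ≠ r₀ →
      HasDerivAt F (a x * (deriv g x - deriv w x * g x / w x) ^ 2) x := by
    intro x hx hxr₀
    refine ((hP.integral_hasStrictDerivAt 0 x).hasDerivAt.sub
      (hasDerivAt_picone (hZ x hx) (hw' x) (hg' x) (hw_ne x (Ioo_subset_Icc_self hx) hxr₀))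
      ).congr_deriv ?_
    ring
  have hF_le : ∀ b c, 0 ≤ b → b ≤ c → c ≤ 1 → r₀ ∉ Ioo b c → F b ≤ F c :=
    fun b c hb hbc hc hr₀bc => le_of_hasDerivAt_nonneg hbc
      (hF_cont.mono (Icc_subset_Icc hb hc))
      (fun x hx => hF_deriv x ⟨hb.trans_lt hx.1, hx.2.trans_le hc⟩ fun h => hr₀bc (h ▸ hx))
      (fun x hx => mul_nonneg (ha_nonneg x ⟨hb.trans_lt hx.1, hx.2.trans_le hc⟩) (sq_nonneg _))
  calc 0 = F 0 := by simp [F, ha₀]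
    _ ≤ F r₀ := hF_le 0 r₀ le_rfl hr₀.1.le hr₀.2.le fun h => h.2.false
    _ ≤ F 1 := hF_le r₀ 1 hr₀.1.le hr₀.2.le le_rfl fun h => h.1.false
    _ = ∫ x in (0:ℝ)..1, P x := by simp [F, hg₁]

namespace RadialHenon

/-- The radial form of `-Δu = |x|^α u^p` in the unit ball of `ℝⁿ`, with `u = 0` on the
boundary. -/
structure IsSolution (n α p : ℝ) (u : ℝ → ℝ) : Prop where
  contDiff : ContDiff ℝ 2 u
  ode : ∀ r ∈ Ioo (0:ℝ) 1,
    deriv (fun s => s ^ (n - 1) * deriv u s) r = -(r ^ (n - 1 + α) * u r ^ p)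
  map_one : u 1 = 0
  pos : ∀ r ∈ Ico (0:ℝ) 1, 0 < u r

noncomputable def elasticity (u : ℝ → ℝ) (r : ℝ) : ℝ := -(r * deriv u r) / u r

noncomputable def scaledPotential (α p : ℝ) (u : ℝ → ℝ) (r : ℝ) : ℝ := r ^ (2 + α) * u r ^ (p - 1)

noncomputable def barrier (n α p : ℝ) (u : ℝ → ℝ) (r : ℝ) : ℝ :=
  scaledPotential α p u r - (p + 1) / 2 * (elasticity u r * (n - 2 - elasticity u r))

/-- `λ ^ γ u (λ r)` solves the same equation as `u` for every `λ > 0`. -/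
noncomputable def scalingExponent (α p : ℝ) : ℝ := (2 + α) / (p - 1)

/-- The derivative of `λ ^ γ u (λ r)` at `λ = 1`; it solves the linearised equation. -/
noncomputable def scalingMode (α p : ℝ) (u : ℝ → ℝ) (r : ℝ) : ℝ :=
  scalingExponent α p * u r + r * deriv u r

noncomputable def quadForm (n α p : ℝ) (u v : ℝ → ℝ) : ℝ :=
  ∫ r in (0:ℝ)..1, r ^ (n - 1) * deriv v r ^ 2 - p * r ^ (n - 1 + α) * u r ^ (p - 1) * v r ^ 2

theorem scalingExponent_mul {α p : ℝ} (hp : p ≠ 1) : scalingExponent α p * (p - 1) = 2 + α :=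
  div_mul_cancel₀ _ (sub_ne_zero.2 hp)

namespace IsSolution

variable {n α p : ℝ} {u : ℝ → ℝ}

theorem contDiff_deriv (hu : IsSolution n α p u) : ContDiff ℝ 1 (deriv u) :=
  ((contDiff_succ_iff_deriv (n := 1)).1 hu.contDiff).2.2

theorem hasDerivAt (hu : IsSolution n α p u) (r : ℝ) : HasDerivAt u (deriv u r) r :=
  (hu.contDiff.differentiable two_ne_zero r).hasDerivAt

theorem hasDerivAt_deriv (hu : IsSolution n α p u) (r : ℝ) :
    HasDerivAt (deriv u) (deriv (deriv u) r) r :=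
  (hu.contDiff_deriv.differentiable one_ne_zero r).hasDerivAt

theorem nonneg (hu : IsSolution n α p u) {r : ℝ} (hr : r ∈ Icc (0:ℝ) 1) : 0 ≤ u r := by
  rcases hr.2.eq_or_lt with rfl | hr1
  · exact hu.map_one.ge
  · exact (hu.pos r ⟨hr.1, hr1⟩).le

theorem continuous_rpow (hu : IsSolution n α p u) {q : ℝ} (hq : 0 ≤ q) :
    Continuous fun r => u r ^ q :=
  (Real.continuous_rpow_const hq).comp hu.contDiff.continuous

theorem hasDerivAt_flux (hu : IsSolution n α p u) {r : ℝ} (hr : r ∈ Ioo (0:ℝ) 1) :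
    HasDerivAt (fun s => s ^ (n - 1) * deriv u s) (-(r ^ (n - 1 + α) * u r ^ p)) r := by
  have h : DifferentiableAt ℝ (fun s => s ^ (n - 1) * deriv u s) r :=
    ((Real.hasDerivAt_rpow_const (Or.inl hr.1.ne')).mul (hu.hasDerivAt_deriv r)).differentiableAt
  simpa only [hu.ode r hr] using h.hasDerivAt

theorem mul_deriv_deriv (hu : IsSolution n α p u) {r : ℝ} (hr : r ∈ Ioo (0:ℝ) 1) :
    r * deriv (deriv u) r = -((n - 1) * deriv u r) - r ^ (1 + α) * u r ^ p := by
  have h : HasDerivAt (fun s => s ^ (n - 1) * deriv u s)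
      ((n - 1) * r ^ (n - 1 - 1) * deriv u r + r ^ (n - 1) * deriv (deriv u) r) r :=
    (Real.hasDerivAt_rpow_const (Or.inl hr.1.ne')).mul (hu.hasDerivAt_deriv r)
  have hode := hu.ode r hr
  rw [h.deriv] at hode
  have hr0 : r ≠ 0 := hr.1.ne'
  have e1 : r ^ (n - 1 - 1) = r ^ (n - 2) := by ring_nf
  have e2 : r ^ (n - 1) = r ^ (n - 2) * r := by
    rw [← Real.rpow_add_one hr0]; ring_nf
  have e3 : r ^ (n - 1 + α) = r ^ (n - 2) * r ^ (1 + α) := by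
    rw [← Real.rpow_add hr.1]; ring_nf
  rw [e1, e2, e3] at hode
  have hpos : 0 < r ^ (n - 2) := Real.rpow_pos_of_pos hr.1 _
  apply mul_left_cancel₀ hpos.ne'
  linear_combination hode

theorem continuous_source (hn : 1 < n) (hα : 0 ≤ α) (hp : 0 ≤ p) (hu : IsSolution n α p u) :
    Continuous fun s => s ^ (n - 1 + α) * u s ^ p :=
  (Real.continuous_rpow_const (by linarith)).mul (hu.continuous_rpow hp)

theorem flux_eq (hn : 1 < n) (hα : 0 ≤ α) (hp : 0 ≤ p) (hu : IsSolution n α p u) {r : ℝ}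
    (hr : r ∈ Icc (0:ℝ) 1) :
    r ^ (n - 1) * deriv u r = -∫ s in (0:ℝ)..r, s ^ (n - 1 + α) * u s ^ p := by
  have hcont : Continuous fun s => s ^ (n - 1) * deriv u s :=
    (Real.continuous_rpow_const (by linarith)).mul hu.contDiff_deriv.continuous
  have hFTC := integral_eq_sub_of_hasDerivAt_of_le hr.1
    hcont.continuousOn (fun x hx => hu.hasDerivAt_flux ⟨hx.1, hx.2.trans_le hr.2⟩)
    ((hu.continuous_source hn hα hp).neg.intervalIntegrable 0 r)
  rw [intervalIntegral.integral_neg, Real.zero_rpow (by linarith), zero_mul, sub_zero] at hFTC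
  linarith

theorem deriv_neg (hn : 1 < n) (hα : 0 ≤ α) (hp : 0 ≤ p) (hu : IsSolution n α p u) {r : ℝ}
    (hr : r ∈ Ioc (0:ℝ) 1) : deriv u r < 0 := by
  have hint : 0 < ∫ s in (0:ℝ)..r, s ^ (n - 1 + α) * u s ^ p :=
    intervalIntegral_pos_of_pos_on ((hu.continuous_source hn hα hp).intervalIntegrable 0 r)
      (fun s hs => mul_pos (Real.rpow_pos_of_pos hs.1 _)
        (Real.rpow_pos_of_pos (hu.pos s ⟨hs.1.le, hs.2.trans_le hr.2⟩) _)) hr.1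
  have hflux := hu.flux_eq hn hα hp (Ioc_subset_Icc_self hr)
  have hrpow : 0 < r ^ (n - 1) := Real.rpow_pos_of_pos hr.1 _
  nlinarith

theorem antitoneOn (hn : 1 < n) (hα : 0 ≤ α) (hp : 0 ≤ p) (hu : IsSolution n α p u) :
    AntitoneOn u (Icc 0 1) :=
  antitoneOn_of_deriv_nonpos (convex_Icc 0 1) hu.contDiff.continuous.continuousOn
    (hu.contDiff.differentiable two_ne_zero).differentiableOn
    (fun x hx => by
      rw [interior_Icc] at hx
      exact (hu.deriv_neg hn hα hp (Ioo_subset_Ioc_self hx)).le)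

theorem integral_flux_mul_deriv (hn : 1 < n) (hα : 0 ≤ α) (hp : 0 ≤ p) (hu : IsSolution n α p u)
    {v : ℝ → ℝ} (hv : ContDiff ℝ 1 v) (hv₁ : v 1 = 0) :
    ∫ r in (0:ℝ)..1, r ^ (n - 1) * deriv u r * deriv v r =
      ∫ r in (0:ℝ)..1, r ^ (n - 1 + α) * u r ^ p * v r := by
  have hE : Continuous fun s => s ^ (n - 1) * deriv u s :=
    (Real.continuous_rpow_const (by linarith)).mul hu.contDiff_deriv.continuous
  have hG1 : Continuous fun r => r ^ (n - 1) * deriv u r * deriv v r :=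
    hE.mul (hv.continuous_deriv le_rfl)
  have hG2 : Continuous fun r => r ^ (n - 1 + α) * u r ^ p * v r :=
    (hu.continuous_source hn hα hp).mul hv.continuous
  have hFTC := integral_eq_sub_of_hasDerivAt_of_le (f := fun x => x ^ (n - 1) * deriv u x * v x)
    (f' := fun x => x ^ (n - 1) * deriv u x * deriv v x - x ^ (n - 1 + α) * u x ^ p * v x)
    zero_le_one (hE.mul hv.continuous).continuousOn
    (fun x hx => ((hu.hasDerivAt_flux hx).mul (hv.differentiable one_ne_zero x).hasDerivAt
      ).congr_deriv (by ring))
    ((hG1.sub hG2).intervalIntegrable 0 1)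
  rw [intervalIntegral.integral_sub (hG1.intervalIntegrable 0 1) (hG2.intervalIntegrable 0 1),
    hv₁, Real.zero_rpow (by linarith)] at hFTC
  linarith

theorem integral_flux_mul_deriv_self (hn : 1 < n) (hα : 0 ≤ α) (hp : 0 ≤ p)
    (hu : IsSolution n α p u) :
    ∫ r in (0:ℝ)..1, r ^ (n - 1) * deriv u r * deriv u r =
      ∫ r in (0:ℝ)..1, r ^ (n - 1 + α) * u r ^ (p + 1) := by
  rw [hu.integral_flux_mul_deriv hn hα hp (hu.contDiff.of_le one_le_two) hu.map_one]
  refine intervalIntegral.integral_congr fun r hr => ?_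
  rw [uIcc_of_le zero_le_one] at hr
  simp only [mul_assoc, ← Real.rpow_add_one' (hu.nonneg hr) (by linarith : p + 1 ≠ 0)]

theorem elasticity_pos (hn : 1 < n) (hα : 0 ≤ α) (hp : 0 ≤ p) (hu : IsSolution n α p u) {r : ℝ}
    (hr : r ∈ Ioo (0:ℝ) 1) : 0 < elasticity u r :=
  div_pos (by nlinarith [hu.deriv_neg hn hα hp (Ioo_subset_Ioc_self hr), hr.1])
    (hu.pos r (Ioo_subset_Ico_self hr))

theorem hasDerivAt_elasticity (hu : IsSolution n α p u) {r : ℝ} (hr : r ∈ Ioo (0:ℝ) 1) :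
    HasDerivAt (elasticity u)
      ((scaledPotential α p u r + elasticity u r ^ 2 - (n - 2) * elasticity u r) / r) r := by
  have hu₀ := hu.pos r (Ioo_subset_Ico_self hr)
  refine ((((hasDerivAt_id r).mul (hu.hasDerivAt_deriv r)).neg).div (hu.hasDerivAt r)
    hu₀.ne').congr_deriv ?_
  have hode := hu.mul_deriv_deriv hr
  have e1 : r ^ (2 + α) = r * r ^ (1 + α) := by
    rw [show (2:ℝ) + α = 1 + (1 + α) by ring, Real.rpow_add hr.1, Real.rpow_one]
  have hr₀ : r ≠ 0 := hr.1.ne'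
  simp only [elasticity, scaledPotential, e1, Real.rpow_sub_one hu₀.ne', Pi.neg_apply,
    Pi.mul_apply, id]
  field_simp
  linear_combination (-u r) * hode

theorem hasDerivAt_scaledPotential (hp : p ≠ 1) (hu : IsSolution n α p u) {r : ℝ}
    (hr : r ∈ Ioo (0:ℝ) 1) :
    HasDerivAt (scaledPotential α p u)
      ((p - 1) * scaledPotential α p u r * (scalingExponent α p - elasticity u r) / r) r := by
  have hu₀ := hu.pos r (Ioo_subset_Ico_self hr)
  refine ((Real.hasDerivAt_rpow_const (p := 2 + α) (Or.inl hr.1.ne')).mul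
    ((hu.hasDerivAt r).rpow_const (p := p - 1) (Or.inl hu₀.ne'))).congr_deriv ?_
  have hr₀ : r ≠ 0 := hr.1.ne'
  have hp₁ : p - 1 ≠ 0 := sub_ne_zero.2 hp
  simp only [scaledPotential, scalingExponent, elasticity, Real.rpow_sub_one hr₀,
    Real.rpow_sub_one hu₀.ne']
  field_simp
  ring

theorem integral_source_le (hn : 1 < n) (hα : 0 ≤ α) (hp : 0 ≤ p) (hu : IsSolution n α p u)
    {r : ℝ} (hr : r ∈ Icc (0:ℝ) 1) :
    (∫ s in (0:ℝ)..r, s ^ (n - 1 + α) * u s ^ p) ≤ u 0 ^ p * (r ^ (n + α) / (n + α)) := by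
  have hnα : n - 1 + α + 1 = n + α := by ring
  calc (∫ s in (0:ℝ)..r, s ^ (n - 1 + α) * u s ^ p)
      ≤ ∫ s in (0:ℝ)..r, u 0 ^ p * s ^ (n - 1 + α) := by
        refine intervalIntegral.integral_mono_on hr.1
          ((hu.continuous_source hn hα hp).intervalIntegrable 0 r)
          ((continuous_const.mul (Real.continuous_rpow_const (by linarith))).intervalIntegrable
            0 r) fun s hs => ?_
        have hs' : s ∈ Icc (0:ℝ) 1 := ⟨hs.1, hs.2.trans hr.2⟩
        rw [mul_comm]
        exact mul_le_mul_of_nonneg_right (Real.rpow_le_rpow (hu.nonneg hs')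
          (hu.antitoneOn hn hα hp ⟨le_rfl, zero_le_one⟩ hs' hs.1) hp) (Real.rpow_nonneg hs.1 _)
    _ = u 0 ^ p * (r ^ (n + α) / (n + α)) := by
        rw [intervalIntegral.integral_const_mul, integral_rpow (Or.inl (by linarith)), hnα,
          Real.zero_rpow (by linarith), sub_zero]

theorem elasticity_mul_le (hn : 2 < n) (hα : 0 ≤ α) (hp : 0 ≤ p) (hu : IsSolution n α p u)
    {r : ℝ} (hr : r ∈ Ioo (0:ℝ) 1) :
    elasticity u r * ((n + α) * u r ^ p) ≤ scaledPotential α p u r * u 0 ^ p := by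
  have hu₀ := hu.pos r (Ioo_subset_Ico_self hr)
  have hflux := hu.flux_eq (by linarith) hα hp (Ioo_subset_Icc_self hr)
  have hint := hu.integral_source_le (by linarith) hα hp (Ioo_subset_Icc_self hr)
  have hr₀ : r ≠ 0 := hr.1.ne'
  have hnα : 0 < n + α := by linarith
  have e1 : r ^ (n - 1) = r ^ (n - 2) * r := by rw [← Real.rpow_add_one hr₀]; ring_nf
  have e2 : r ^ (n + α) = r ^ (n - 2) * r ^ (2 + α) := by rw [← Real.rpow_add hr.1]; ring_nf
  have hpow : 0 < r ^ (n - 2) := Real.rpow_pos_of_pos hr.1 _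
  set I := ∫ s in (0:ℝ)..r, s ^ (n - 1 + α) * u s ^ p
  have hT : -(r * deriv u r) = I / r ^ (n - 2) := by
    rw [eq_div_iff hpow.ne']; linear_combination -hflux + deriv u r * e1
  have hI : I * (n + α) ≤ u 0 ^ p * r ^ (n + α) := by
    have := mul_le_mul_of_nonneg_right hint hnα.le
    rwa [mul_assoc, div_mul_cancel₀ _ hnα.ne'] at this
  simp only [elasticity, scaledPotential, hT, Real.rpow_sub_one hu₀.ne']
  calc I / r ^ (n - 2) / u r * ((n + α) * u r ^ p)
      = I * (n + α) * (u r ^ p / u r) / r ^ (n - 2) := by ring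
    _ ≤ u 0 ^ p * r ^ (n + α) * (u r ^ p / u r) / r ^ (n - 2) := by gcongr
    _ = r ^ (2 + α) * (u r ^ p / u r) * u 0 ^ p := by
        rw [e2]; field_simp

theorem barrier_eventually_pos (hn : 2 < n) (hα : 0 ≤ α) (hp : 1 < p)
    (hsub : p * (n - 2) < n + 2 + 2 * α) (hu : IsSolution n α p u) :
    ∀ᶠ r in 𝓝[>] 0, 0 < barrier n α p u r := by
  have hU : 0 < u 0 ^ p := Real.rpow_pos_of_pos (hu.pos 0 ⟨le_rfl, zero_lt_one⟩) _
  have hk : (p + 1) / 2 * (n - 2) * u 0 ^ p < (n + α) * u 0 ^ p :=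
    mul_lt_mul_of_pos_right (by linarith) hU
  have hcont : ContinuousAt (fun r => (n + α) * u r ^ p) 0 :=
    (continuous_const.mul (hu.continuous_rpow (by linarith))).continuousAt
  filter_upwards [(hcont.eventually_const_lt hk).filter_mono nhdsWithin_le_nhds,
    Ioo_mem_nhdsGT zero_lt_one] with r hr hr₁
  have hT := hu.elasticity_pos (by linarith) hα (by linarith) hr₁
  -- `u r ^ p` is close to `u 0 ^ p`, and `(p + 1)(n - 2) < 2 (n + α)` is subcriticality.
  have hTh : (p + 1) / 2 * (n - 2) * elasticity u r < scaledPotential α p u r := by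
    refine lt_of_mul_lt_mul_right ?_ hU.le
    calc (p + 1) / 2 * (n - 2) * elasticity u r * u 0 ^ p
        = elasticity u r * ((p + 1) / 2 * (n - 2) * u 0 ^ p) := by ring
      _ < elasticity u r * ((n + α) * u r ^ p) := mul_lt_mul_of_pos_left hr hT
      _ ≤ scaledPotential α p u r * u 0 ^ p := hu.elasticity_mul_le hn hα (by linarith) hr₁
  have hT2 : 0 ≤ (p + 1) / 2 * elasticity u r ^ 2 := by positivity
  simp only [barrier]
  nlinarith

theorem hasDerivAt_barrier (hp : p ≠ 1) (hu : IsSolution n α p u) {r : ℝ}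
    (hr : r ∈ Ioo (0:ℝ) 1) :
    HasDerivAt (barrier n α p u)
      (((p - 1) * scaledPotential α p u r * (scalingExponent α p - elasticity u r)
        - (p + 1) / 2 * (scaledPotential α p u r + elasticity u r ^ 2
          - (n - 2) * elasticity u r) * (n - 2 - 2 * elasticity u r)) / r) r := by
  refine ((hu.hasDerivAt_scaledPotential hp hr).sub
    (((hu.hasDerivAt_elasticity hr).mul ((hasDerivAt_const r (n - 2)).sub
      (hu.hasDerivAt_elasticity hr))).const_mul ((p + 1) / 2))).congr_deriv ?_
  simp only [Pi.sub_apply]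
  ring

theorem exists_hasDerivAt_barrier_pos (hn : 2 < n) (hα : 0 ≤ α) (hp : 1 < p)
    (hsub : p * (n - 2) < n + 2 + 2 * α) (hu : IsSolution n α p u) {r : ℝ}
    (hr : r ∈ Ioo (0:ℝ) 1) (hB : barrier n α p u r = 0) :
    ∃ d, 0 < d ∧ HasDerivAt (barrier n α p u) d r := by
  refine ⟨_, ?_, hu.hasDerivAt_barrier hp.ne' hr⟩
  have hγ : (n - 2) / 2 < scalingExponent α p := by
    rw [scalingExponent, lt_div_iff₀ (by linarith)]; linarith
  have hT := hu.elasticity_pos (by linarith) hα (by linarith) hr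
  have hH : 0 < scaledPotential α p u r :=
    mul_pos (Real.rpow_pos_of_pos hr.1 _) (Real.rpow_pos_of_pos (hu.pos r ⟨hr.1.le, hr.2⟩) _)
  set T := elasticity u r
  set H := scaledPotential α p u r
  have hHT : H = (p + 1) / 2 * (T * (n - 2 - T)) := by simp only [barrier] at hB; linarith
  have hnT : 0 < n - 2 - T := by
    by_contra! h
    nlinarith [mul_nonpos_of_nonneg_of_nonpos hT.le h]
  have hnum : (p - 1) * H * (scalingExponent α p - T)
      - (p + 1) / 2 * (H + T ^ 2 - (n - 2) * T) * (n - 2 - 2 * T)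
      = (p + 1) / 2 * T * (n - 2 - T) * ((p - 1) * (scalingExponent α p - (n - 2) / 2)) := by
    rw [hHT]; ring
  rw [hnum]
  have : 0 < p - 1 := by linarith
  have : 0 < scalingExponent α p - (n - 2) / 2 := by linarith
  exact div_pos (by positivity) hr.1

theorem barrier_pos (hn : 2 < n) (hα : 0 ≤ α) (hp : 1 < p)
    (hsub : p * (n - 2) < n + 2 + 2 * α) (hu : IsSolution n α p u) :
    ∀ r ∈ Ioo (0:ℝ) 1, 0 < barrier n α p u r :=
  pos_of_hasDerivAt_pos_of_eq_zero
    (fun _ hr => (hu.hasDerivAt_barrier hp.ne' hr).continuousAt.continuousWithinAt)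
    (hu.barrier_eventually_pos hn hα hp hsub)
    (fun _ hr hB => hu.exists_hasDerivAt_barrier_pos hn hα hp hsub hr hB)

theorem deriv_elasticity_pos (hn : 2 < n) (hα : 0 ≤ α) (hp : 1 < p)
    (hsub : p * (n - 2) < n + 2 + 2 * α) (hu : IsSolution n α p u) {r : ℝ}
    (hr : r ∈ Ioo (0:ℝ) 1) : 0 < deriv (elasticity u) r := by
  rw [(hu.hasDerivAt_elasticity hr).deriv]
  refine div_pos ?_ hr.1
  have hB := hu.barrier_pos hn hα hp hsub r hr
  have hT := hu.elasticity_pos (by linarith) hα (by linarith) hr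
  simp only [barrier] at hB
  rcases le_or_gt (elasticity u r) (n - 2) with h | h
  · nlinarith [mul_nonneg hT.le (sub_nonneg.2 h)]
  · have hH : 0 < scaledPotential α p u r :=
      mul_pos (Real.rpow_pos_of_pos hr.1 _) (Real.rpow_pos_of_pos (hu.pos r ⟨hr.1.le, hr.2⟩) _)
    nlinarith [mul_pos hT (sub_pos.2 h)]

theorem strictMonoOn_elasticity (hn : 2 < n) (hα : 0 ≤ α) (hp : 1 < p)
    (hsub : p * (n - 2) < n + 2 + 2 * α) (hu : IsSolution n α p u) :
    StrictMonoOn (elasticity u) (Ioo 0 1) :=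
  strictMonoOn_of_deriv_pos (convex_Ioo 0 1)
    (fun _ hr => (hu.hasDerivAt_elasticity hr).continuousAt.continuousWithinAt)
    (fun r hr => hu.deriv_elasticity_pos hn hα hp hsub (by rwa [interior_Ioo] at hr))

theorem contDiff_scalingMode (hu : IsSolution n α p u) : ContDiff ℝ 1 (scalingMode α p u) :=
  (contDiff_const.mul (hu.contDiff.of_le one_le_two)).add (contDiff_id.mul hu.contDiff_deriv)

theorem hasDerivAt_scalingMode (hu : IsSolution n α p u) (r : ℝ) :
    HasDerivAt (scalingMode α p u)
      (scalingExponent α p * deriv u r + (deriv u r + r * deriv (deriv u) r)) r :=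
  ((hu.hasDerivAt r).const_mul _).add
    (((hasDerivAt_id r).mul (hu.hasDerivAt_deriv r)).congr_deriv (by simp))

theorem scalingMode_eq (hu : IsSolution n α p u) {r : ℝ} (hr : r ∈ Ico (0:ℝ) 1) :
    scalingMode α p u r = u r * (scalingExponent α p - elasticity u r) := by
  have hu₀ := (hu.pos r hr).ne'
  simp only [scalingMode, elasticity]
  field_simp
  ring

/-- Written without `u'''`, which need not exist since `u` is only `C²`. -/
theorem flux_scalingMode_eq (hu : IsSolution n α p u) {r : ℝ} (hr : r ∈ Ioo (0:ℝ) 1) :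
    r ^ (n - 1) * deriv (scalingMode α p u) r =
      (scalingExponent α p + 2 - n) * (r ^ (n - 1) * deriv u r) - r ^ (n + α) * u r ^ p := by
  have hode := hu.mul_deriv_deriv hr
  have e : r ^ (n + α) = r ^ (n - 1) * r ^ (1 + α) := by rw [← Real.rpow_add hr.1]; ring_nf
  rw [(hu.hasDerivAt_scalingMode r).deriv, e]
  linear_combination r ^ (n - 1) * hode

theorem hasDerivAt_flux_scalingMode (hp : p ≠ 1) (hu : IsSolution n α p u) {r : ℝ}
    (hr : r ∈ Ioo (0:ℝ) 1) :
    HasDerivAt (fun s => s ^ (n - 1) * deriv (scalingMode α p u) s)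
      (-(p * r ^ (n - 1 + α) * u r ^ (p - 1) * scalingMode α p u r)) r := by
  have hu₀ := hu.pos r (Ioo_subset_Ico_self hr)
  have hF := ((hu.hasDerivAt_flux hr).const_mul (scalingExponent α p + 2 - n)).sub
    ((Real.hasDerivAt_rpow_const (p := n + α) (Or.inl hr.1.ne')).mul
      ((hu.hasDerivAt r).rpow_const (p := p) (Or.inl hu₀.ne')))
  refine (hF.congr_of_eventuallyEq ?_).congr_deriv ?_
  · filter_upwards [Ioo_mem_nhds hr.1 hr.2] with s hs using hu.flux_scalingMode_eq hs
  · have e1 : r ^ (n + α - 1) = r ^ (n - 1 + α) := by ring_nf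
    have e2 : r ^ (n + α) = r ^ (n - 1 + α) * r := by rw [← Real.rpow_add_one hr.1.ne']; ring_nf
    have e3 : u r ^ p = u r ^ (p - 1) * u r := by
      rw [← Real.rpow_add_one hu₀.ne']; ring_nf
    rw [e1, e2, e3]
    simp only [scalingMode]
    linear_combination r ^ (n - 1 + α) * u r ^ (p - 1) * u r * scalingExponent_mul (α := α) hp

theorem exists_zero_scalingMode (hn : 2 < n) (hα : 0 ≤ α) (hp : 1 < p)
    (hsub : p * (n - 2) < n + 2 + 2 * α) (hu : IsSolution n α p u) :
    ∃ r₀ ∈ Ioo (0:ℝ) 1, scalingMode α p u r₀ = 0 ∧ deriv (scalingMode α p u) r₀ ≠ 0 ∧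
      ∀ x ∈ Icc (0:ℝ) 1, x ≠ r₀ → scalingMode α p u x ≠ 0 := by
  have hγ : 0 < scalingExponent α p := div_pos (by linarith) (by linarith)
  have hw₀ : 0 < scalingMode α p u 0 := by
    simpa [scalingMode] using mul_pos hγ (hu.pos 0 ⟨le_rfl, zero_lt_one⟩)
  have hw₁ : scalingMode α p u 1 < 0 := by
    simpa [scalingMode, hu.map_one] using
      hu.deriv_neg (by linarith) hα (by linarith) ⟨zero_lt_one, le_rfl⟩
  obtain ⟨r₀, hr₀, hwr₀⟩ := intermediate_value_Ioo' zero_le_one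
    hu.contDiff_scalingMode.continuous.continuousOn ⟨hw₁, hw₀⟩
  have hw_eq : ∀ x ∈ Ioo (0:ℝ) 1,
      scalingMode α p u x = 0 ↔ elasticity u x = scalingExponent α p := fun x hx => by
    rw [hu.scalingMode_eq (Ioo_subset_Ico_self hx), mul_eq_zero, sub_eq_zero,
      eq_comm (a := scalingExponent α p)]
    exact or_iff_right (hu.pos x (Ioo_subset_Ico_self hx)).ne'
  have hTr₀ := (hw_eq r₀ hr₀).1 hwr₀
  refine ⟨r₀, hr₀, hwr₀, ?_, fun x hx hxr₀ => ?_⟩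
  · have hd : HasDerivAt (scalingMode α p u) (deriv u r₀ * (scalingExponent α p - elasticity u r₀)
        + u r₀ * (0 - deriv (elasticity u) r₀)) r₀ := by
      refine ((hu.hasDerivAt r₀).mul ((hasDerivAt_const r₀ (scalingExponent α p)).sub
        (hu.hasDerivAt_elasticity hr₀).differentiableAt.hasDerivAt)).congr_of_eventuallyEq ?_
      filter_upwards [Ioo_mem_nhds hr₀.1 hr₀.2] with x hx
      exact hu.scalingMode_eq (Ioo_subset_Ico_self hx)
    rw [hd.deriv, hTr₀, sub_self, mul_zero, zero_add, zero_sub, mul_neg, neg_ne_zero]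
    exact mul_ne_zero (hu.pos r₀ (Ioo_subset_Ico_self hr₀)).ne'
      (hu.deriv_elasticity_pos hn hα hp hsub hr₀).ne'
  · rcases hx.1.eq_or_lt with rfl | hx₀
    · exact hw₀.ne'
    rcases hx.2.eq_or_lt with rfl | hx₁
    · exact hw₁.ne
    rw [Ne, hw_eq x ⟨hx₀, hx₁⟩, ← hTr₀]
    exact (hu.strictMonoOn_elasticity hn hα hp hsub).injOn.ne ⟨hx₀, hx₁⟩ hr₀ hxr₀

theorem exists_quadForm_nonneg (hn : 2 < n) (hα : 0 ≤ α) (hp : 1 < p)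
    (hsub : p * (n - 2) < n + 2 + 2 * α) (hu : IsSolution n α p u) :
    ∃ r₀ ∈ Ioo (0:ℝ) 1, ∀ g : ℝ → ℝ, ContDiff ℝ 1 g → g r₀ = 0 → g 1 = 0 →
      0 ≤ quadForm n α p u g := by
  obtain ⟨r₀, hr₀, hwr₀, hw'r₀, hw_ne⟩ := hu.exists_zero_scalingMode hn hα hp hsub
  exact ⟨r₀, hr₀, fun g hg hgr₀ hg₁ => integral_nonneg_of_picone
    (q := fun r => p * r ^ (n - 1 + α) * u r ^ (p - 1)) hr₀
    (Real.continuous_rpow_const (by linarith)) (Real.zero_rpow (by linarith))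
    (fun x hx => Real.rpow_nonneg hx.1.le _)
    ((continuous_const.mul (Real.continuous_rpow_const (by linarith))).mul
      (hu.continuous_rpow (by linarith)))
    hu.contDiff_scalingMode (fun x hx => hu.hasDerivAt_flux_scalingMode hp.ne' hx)
    hw_ne hwr₀ hw'r₀ hg hgr₀ hg₁⟩

theorem quadForm_add_mul (hn : 1 < n) (hα : 0 ≤ α) (hp : 1 ≤ p) (hu : IsSolution n α p u)
    {v : ℝ → ℝ} (hv : ContDiff ℝ 1 v) (hv₁ : v 1 = 0) (t : ℝ) :
    quadForm n α p u (fun r => v r + t * u r) = quadForm n α p u v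
      - (p - 1) * (2 * t * (∫ r in (0:ℝ)..1, r ^ (n - 1 + α) * u r ^ p * v r)
        + t ^ 2 * ∫ r in (0:ℝ)..1, r ^ (n - 1 + α) * u r ^ (p + 1)) := by
  have hweak_v := hu.integral_flux_mul_deriv hn hα (by linarith) hv hv₁
  have hweak_u := hu.integral_flux_mul_deriv_self hn hα (by linarith)
  have hderiv (r : ℝ) : deriv (fun r => v r + t * u r) r = deriv v r + t * deriv u r :=
    ((hv.differentiable one_ne_zero r).hasDerivAt.add ((hu.hasDerivAt r).const_mul t)).deriv
  have h1 : Continuous fun r : ℝ => r ^ (n - 1) := Real.continuous_rpow_const (by linarith)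
  have h2 : Continuous fun r : ℝ => r ^ (n - 1 + α) := Real.continuous_rpow_const (by linarith)
  have h3 := hu.continuous_rpow (q := p - 1) (by linarith)
  have h4 := hu.continuous_rpow (q := p) (by linarith)
  have h5 := hu.continuous_rpow (q := p + 1) (by linarith)
  have h6 := hu.contDiff.continuous
  have h7 := hu.contDiff_deriv.continuous
  have h8 := hv.continuous
  have h9 := hv.continuous_deriv le_rfl
  unfold quadForm
  rw [intervalIntegral.integral_congr (g := fun r =>
      (r ^ (n - 1) * deriv v r ^ 2 - p * r ^ (n - 1 + α) * u r ^ (p - 1) * v r ^ 2)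
      + (2 * t * (r ^ (n - 1) * deriv u r * deriv v r - r ^ (n - 1 + α) * u r ^ p * v r)
        + t ^ 2 * (r ^ (n - 1) * deriv u r * deriv u r - r ^ (n - 1 + α) * u r ^ (p + 1)))
      - (p - 1) * (2 * t * (r ^ (n - 1 + α) * u r ^ p * v r)
        + t ^ 2 * (r ^ (n - 1 + α) * u r ^ (p + 1))))]
  · simp (disch := exact Continuous.intervalIntegrable (by fun_prop) 0 1) only
      [intervalIntegral.integral_add, intervalIntegral.integral_sub,
        intervalIntegral.integral_const_mul]
    rw [hweak_v, hweak_u]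
    ring
  · intro r hr
    rw [uIcc_of_le zero_le_one] at hr
    have e1 : u r ^ p * u r = u r ^ (p + 1) :=
      (Real.rpow_add_one' (hu.nonneg hr) (by linarith)).symm
    have e2 : u r ^ (p - 1) * u r = u r ^ p := by
      rw [← Real.rpow_add_one' (hu.nonneg hr) (by linarith)]; ring_nf
    simp only [hderiv]
    linear_combination (-(p * r ^ (n - 1 + α)) * (2 * t * v r + t ^ 2 * u r)) * e2
      - (p * r ^ (n - 1 + α) * t ^ 2) * e1

theorem quadForm_eq_sub (hn : 1 < n) (hα : 0 ≤ α) (hp : 1 ≤ p) (hu : IsSolution n α p u)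
    {v : ℝ → ℝ} (hv : ContDiff ℝ 1 v) :
    quadForm n α p u v = (∫ r in (0:ℝ)..1, r ^ (n - 1) * deriv v r ^ 2)
      - p * ∫ r in (0:ℝ)..1, r ^ (n - 1 + α) * u r ^ (p - 1) * v r ^ 2 := by
  have h1 : Continuous fun r : ℝ => r ^ (n - 1) := Real.continuous_rpow_const (by linarith)
  have h2 : Continuous fun r : ℝ => r ^ (n - 1 + α) := Real.continuous_rpow_const (by linarith)
  have h3 := hu.continuous_rpow (q := p - 1) (by linarith)
  have h4 := hv.continuous
  have h5 := hv.continuous_deriv le_rfl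
  simp (disch := exact Continuous.intervalIntegrable (by fun_prop) 0 1) only [quadForm,
    mul_assoc p, intervalIntegral.integral_sub, intervalIntegral.integral_const_mul]

theorem integral_weight_mul_rpow_pos (hn : 1 < n) (hα : 0 ≤ α) (hu : IsSolution n α p u)
    {q : ℝ} (hq : 0 ≤ q) : 0 < ∫ r in (0:ℝ)..1, r ^ (n - 1 + α) * u r ^ q :=
  intervalIntegral_pos_of_pos_on
    (((Real.continuous_rpow_const (by linarith)).mul (hu.continuous_rpow hq)).intervalIntegrable
      0 1)
    (fun r hr => mul_pos (Real.rpow_pos_of_pos hr.1 _)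
      (Real.rpow_pos_of_pos (hu.pos r (Ioo_subset_Ico_self hr)) _)) zero_lt_one

end IsSolution
end RadialHenon

open RadialHenon

theorem stmt_11_general (N : ℕ) (hN : 3 ≤ N) (α p : ℝ) (hα : 0 < α) (hp : 1 < p)
    (hpα : p < ((N : ℝ) + 2 + 2 * α) / ((N : ℝ) - 2))
    (u : ℝ → ℝ) (hu : ContDiff ℝ 2 u)
    (hODE : ∀ r ∈ Ioo (0:ℝ) 1,
      deriv (fun s => s ^ ((N:ℝ) - 1) * deriv u s) r = -(r ^ ((N:ℝ) - 1 + α) * u r ^ p))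
    (hu1 : u 1 = 0)
    (hupos : ∀ r ∈ Ico (0:ℝ) 1, 0 < u r) :
    ∀ v : ℝ → ℝ, ContDiff ℝ 1 v → v 1 = 0 →
      (∫ r in (0:ℝ)..1, r ^ ((N:ℝ) - 1) * (deriv v r) ^ 2)
        - p * (∫ r in (0:ℝ)..1, r ^ ((N:ℝ) - 1 + α) * u r ^ (p - 1) * v r ^ 2)
        + (p - 1) * (∫ r in (0:ℝ)..1, r ^ ((N:ℝ) - 1 + α) * u r ^ p * v r) ^ 2
            / (∫ r in (0:ℝ)..1, r ^ ((N:ℝ) - 1 + α) * u r ^ (p + 1)) ≥ 0 := by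
  intro v hv hv₁
  have hsol : IsSolution N α p u := ⟨hu, hODE, hu1, hupos⟩
  have hN' : (3:ℝ) ≤ N := by exact_mod_cast hN
  have hn : (2:ℝ) < N := by linarith
  have hsub : p * ((N:ℝ) - 2) < N + 2 + 2 * α := by rwa [lt_div_iff₀ (by linarith)] at hpα
  obtain ⟨r₀, hr₀, hQ⟩ := hsol.exists_quadForm_nonneg hn hα.le hp hsub
  -- Correct `v` by a multiple of `u` so that it vanishes at the node `r₀` of the scaling mode.
  set t := -(v r₀ / u r₀)
  have hg := hQ (fun r => v r + t * u r) (hv.add (contDiff_const.mul (hu.of_le one_le_two)))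
    (by simp [t, div_mul_cancel₀ _ (hupos r₀ (Ioo_subset_Ico_self hr₀)).ne'])
    (by simp [hv₁, hu1])
  rw [hsol.quadForm_add_mul (by linarith) hα.le hp.le hv hv₁,
    hsol.quadForm_eq_sub (by linarith) hα.le hp.le hv] at hg
  have hM := hsol.integral_weight_mul_rpow_pos (by linarith) hα.le (q := p + 1) (by linarith)
  set C := ∫ r in (0:ℝ)..1, r ^ ((N:ℝ) - 1 + α) * u r ^ p * v r
  set M := ∫ r in (0:ℝ)..1, r ^ ((N:ℝ) - 1 + α) * u r ^ (p + 1)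
  have hsq : (p - 1) * C ^ 2 / M =
      (p - 1) * (C + t * M) ^ 2 / M - (p - 1) * (2 * t * C + t ^ 2 * M) := by
    field_simp; ring
  have := div_nonneg (mul_nonneg (sub_nonneg.2 hp.le) (sq_nonneg (C + t * M))) hM.le
  rw [ge_iff_le, hsq]
  linarith

theorem stmt_11 (N : ℕ) (hN : 3 ≤ N) (α p : ℝ) (hα : 0 < α) (hp : 1 < p)
    (hpα : p < ((N : ℝ) + 2 + 2 * α) / ((N : ℝ) - 2))
    (u : ℝ → ℝ) (hu : ContDiff ℝ 2 u)
    (hODE : ∀ r ∈ Ioo (0:ℝ) 1,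
      deriv (fun s => s ^ ((N:ℝ) - 1) * deriv u s) r = -(r ^ ((N:ℝ) - 1 + α) * u r ^ p))
    (hu'0 : deriv u 0 = 0) (hu1 : u 1 = 0)
    (hupos : ∀ r ∈ Ico (0:ℝ) 1, 0 < u r) :
    ∀ v : ℝ → ℝ, ContDiff ℝ 1 v → v 1 = 0 →
      (∫ r in (0:ℝ)..1, r ^ ((N:ℝ) - 1) * (deriv v r) ^ 2)
        - p * (∫ r in (0:ℝ)..1, r ^ ((N:ℝ) - 1 + α) * u r ^ (p - 1) * v r ^ 2)
        + (p - 1) * (∫ r in (0:ℝ)..1, r ^ ((N:ℝ) - 1 + α) * u r ^ p * v r) ^ 2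
            / (∫ r in (0:ℝ)..1, r ^ ((N:ℝ) - 1 + α) * u r ^ (p + 1)) ≥ 0 :=
  stmt_11_general N hN α p hα hp hpα u hu hODE hu1 hupos
end

section
/- Let u_p be the positive radial solution of the Henon equation in the unit ball, 0 < α, 1 < p < (N+2+2α)/(N-2), N ≥ 3. Then the linearized problem -Δv = p|x|^α u_p^{p-1} v in B, v = 0 on ∂B has no nontrivial radial solution; i.e., u_p is radially nondegenerate. -/
/-!
Write `k = N - 1`. The scaling solution `z = c u + r u'`, `c = (2 + α) / (p - 1)`, of the
linearized equation is regular at `0`, so its Wronskian `r ^ k (z v' - v z')` with a regular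
solution `v` is constant and vanishes at `r = 0`. Since `u 1 = v 1 = 0`, at `r = 1` it equals
`u'(1) v'(1)`, and `u'(1) < 0` because `r ^ k u'` decreases strictly from `0`. Hence `v` has a
double zero at `1`, and a Grönwall estimate for the energy `v ^ 2 + (r ^ k v') ^ 2` on `[t, 1]`,
`t > 0`, where the coefficients are bounded, gives `v = 0`.
-/

open Set Filter Topology

theorem eqOn_zero_of_neg_mul_le_deriv {E E' : ℝ → ℝ} {a b K : ℝ}
    (hE : ContinuousOn E (Icc a b)) (hE' : ∀ s ∈ Ioo a b, HasDerivAt E (E' s) s)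
    (hK : ∀ s ∈ Ioo a b, -(K * E s) ≤ E' s) (hnonneg : ∀ s ∈ Icc a b, 0 ≤ E s)
    (hb : E b = 0) : ∀ s ∈ Icc a b, E s = 0 := by
  set G : ℝ → ℝ := fun s => Real.exp (K * s) * E s
  have hG' : ∀ s ∈ Ioo a b, HasDerivAt G (Real.exp (K * s) * (K * E s + E' s)) s := by
    intro s hs
    refine (((hasDerivAt_id s).const_mul K).exp.mul (hE' s hs)).congr_deriv ?_
    simp only [id, mul_one]
    ring
  have hG_mono : MonotoneOn G (Icc a b) := by
    refine monotoneOn_of_deriv_nonneg (convex_Icc a b) ?_ ?_ ?_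
    · exact (Real.continuous_exp.comp (continuous_const.mul continuous_id)).continuousOn.mul hE
    · rw [interior_Icc]
      exact fun s hs => (hG' s hs).differentiableAt.differentiableWithinAt
    · rw [interior_Icc]
      intro s hs
      rw [(hG' s hs).deriv]
      exact mul_nonneg (Real.exp_pos _).le (by linarith [hK s hs])
  intro s hs
  have hGs : G s ≤ 0 := by
    simpa [G, hb] using hG_mono hs (right_mem_Icc.2 (hs.1.trans hs.2)) hs.2
  exact le_antisymm (nonpos_of_mul_nonpos_right hGs (Real.exp_pos _)) (hnonneg s hs)

theorem eqOn_zero_of_hasDerivAt_linear_system {v w a q : ℝ → ℝ} {t b : ℝ}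
    (ha : ContinuousOn a (Icc t b)) (hq : ContinuousOn q (Icc t b))
    (hv : ContinuousOn v (Icc t b)) (hw : ContinuousOn w (Icc t b))
    (hv' : ∀ s ∈ Ioo t b, HasDerivAt v (a s * w s) s)
    (hw' : ∀ s ∈ Ioo t b, HasDerivAt w (q s * v s) s) (hvb : v b = 0) (hwb : w b = 0) :
    ∀ s ∈ Icc t b, v s = 0 := by
  obtain ⟨C, hC⟩ := isCompact_Icc.exists_bound_of_continuousOn (ha.add hq)
  have hbound : ∀ s ∈ Ioo t b, -(C * (v s ^ 2 + w s ^ 2)) ≤ 2 * (a s + q s) * (v s * w s) := by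
    intro s hs
    obtain ⟨hlo, hhi⟩ := abs_le.mp (hC s (Ioo_subset_Icc_self hs))
    rw [Pi.add_apply] at hlo hhi
    -- `2 x v w + C (v² + w²) = ((C + x) (v + w)² + (C - x) (v - w)²) / 2` with `x = a s + q s`
    nlinarith [mul_nonneg (neg_le_iff_add_nonneg.mp hlo) (sq_nonneg (v s + w s)),
      mul_nonneg (sub_nonneg.mpr hhi) (sq_nonneg (v s - w s))]
  have henergy := eqOn_zero_of_neg_mul_le_deriv (E := fun s => v s ^ 2 + w s ^ 2)
    ((hv.pow 2).add (hw.pow 2))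
    (fun s hs => by
      refine (((hv' s hs).pow 2).add ((hw' s hs).pow 2)).congr_deriv ?_
      push_cast
      ring)
    hbound (fun s _ => by positivity) (by simp [hvb, hwb])
  intro s hs
  nlinarith [henergy s hs, sq_nonneg (v s), sq_nonneg (w s)]

theorem hasDerivAt_wronskian {y₁ y₂ f₁ f₂ : ℝ → ℝ} {d₁ d₂ P Q x : ℝ}
    (hy₁ : HasDerivAt y₁ d₁ x) (hy₂ : HasDerivAt y₂ d₂ x)
    (hf₁ : HasDerivAt f₁ (-(Q * y₁ x)) x) (hf₂ : HasDerivAt f₂ (-(Q * y₂ x)) x)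
    (hP₁ : f₁ x = P * d₁) (hP₂ : f₂ x = P * d₂) :
    HasDerivAt (fun x => y₁ x * f₂ x - y₂ x * f₁ x) 0 x := by
  refine ((hy₁.mul hf₂).sub (hy₂.mul hf₁)).congr_deriv ?_
  rw [hP₁, hP₂]
  ring

theorem continuous_rpow_mul_deriv_s12 {y : ℝ → ℝ} {k : ℝ} (hk : 0 ≤ k) (hy : ContDiff ℝ 1 y) :
    Continuous fun s => s ^ k * deriv y s :=
  (Real.continuous_rpow_const hk).mul (hy.continuous_deriv le_rfl)

theorem hasDerivAt_rpow_mul_deriv {y : ℝ → ℝ} (hy : ContDiff ℝ 2 y) (k : ℝ) {r : ℝ} (hr : 0 < r) :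
    HasDerivAt (fun s => s ^ k * deriv y s)
      (k * r ^ (k - 1) * deriv y r + r ^ k * deriv (deriv y) r) r :=
  (Real.hasDerivAt_rpow_const (Or.inl hr.ne')).mul (hy.differentiable_deriv_two r).hasDerivAt

theorem hasDerivAt_rpow_mul_deriv_of_deriv_eq {y : ℝ → ℝ} (hy : ContDiff ℝ 2 y) {k r d : ℝ}
    (hr : 0 < r) (h : deriv (fun s => s ^ k * deriv y s) r = d) :
    HasDerivAt (fun s => s ^ k * deriv y s) d r :=
  h ▸ (hasDerivAt_rpow_mul_deriv hy k hr).differentiableAt.hasDerivAt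

section Henon

variable {k α p : ℝ} {u : ℝ → ℝ}

/-- `d/dλ` at `λ = 1` of the rescaled solutions `λ ^ c * u (λ * r)`, `c = (2 + α) / (p - 1)`. -/
noncomputable def henonScaling (α p : ℝ) (u : ℝ → ℝ) (r : ℝ) : ℝ :=
  (2 + α) / (p - 1) * u r + r * deriv u r

theorem contDiff_henonScaling (hu : ContDiff ℝ 2 u) : ContDiff ℝ 1 (henonScaling α p u) :=
  (contDiff_const.mul (hu.of_le (by norm_num))).add (contDiff_id.mul hu.deriv')

theorem hasDerivAt_henonScaling (hu : ContDiff ℝ 2 u) (r : ℝ) :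
    HasDerivAt (henonScaling α p u)
      ((2 + α) / (p - 1) * deriv u r + (deriv u r + r * deriv (deriv u) r)) r := by
  refine ((hu.differentiable (by norm_num) r).hasDerivAt.const_mul _).add ?_
  exact ((hasDerivAt_id' r).mul (hu.differentiable_deriv_two r).hasDerivAt).congr_deriv
    (by rw [one_mul])

/-- The right-hand side no longer involves `u''`, so it can be differentiated once more. -/
theorem rpow_mul_deriv_henonScaling (hu : ContDiff ℝ 2 u)
    (hODE : ∀ r ∈ Ioo (0:ℝ) 1, deriv (fun s => s ^ k * deriv u s) r = -(r ^ (k + α) * u r ^ p))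
    {r : ℝ} (hr : r ∈ Ioo (0:ℝ) 1) :
    r ^ k * deriv (henonScaling α p u) r
      = ((2 + α) / (p - 1) + 1 - k) * (r ^ k * deriv u r) - r ^ (k + 1 + α) * u r ^ p := by
  have hflux := (hasDerivAt_rpow_mul_deriv hu k hr.1).unique
    (hasDerivAt_rpow_mul_deriv_of_deriv_eq hu hr.1 (hODE r hr))
  have hk : r ^ k = r ^ (k - 1) * r := by
    rw [← Real.rpow_add_one hr.1.ne']; ring_nf
  have hkα : r ^ (k + 1 + α) = r ^ (k + α) * r := by
    rw [← Real.rpow_add_one hr.1.ne']; ring_nf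
  rw [(hasDerivAt_henonScaling hu r).deriv]
  linear_combination r * hflux + (k * deriv u r) * hk + u r ^ p * hkα

theorem hasDerivAt_rpow_mul_deriv_henonScaling (hp : 1 < p) (hu : ContDiff ℝ 2 u)
    (hODE : ∀ r ∈ Ioo (0:ℝ) 1, deriv (fun s => s ^ k * deriv u s) r = -(r ^ (k + α) * u r ^ p))
    (hupos : ∀ r ∈ Ioo (0:ℝ) 1, 0 < u r) {r : ℝ} (hr : r ∈ Ioo (0:ℝ) 1) :
    HasDerivAt (fun s => s ^ k * deriv (henonScaling α p u) s)
      (-(p * r ^ (k + α) * u r ^ (p - 1) * henonScaling α p u r)) r := by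
  have hc : (2 + α) / (p - 1) * (p - 1) = 2 + α := div_mul_cancel₀ _ (by linarith)
  have hflux := hasDerivAt_rpow_mul_deriv_of_deriv_eq hu hr.1 (hODE r hr)
  have hpow := (Real.hasDerivAt_rpow_const (p := k + 1 + α) (Or.inl hr.1.ne')).mul
    ((hu.differentiable (by norm_num) r).hasDerivAt.rpow_const (p := p) (Or.inl (hupos r hr).ne'))
  have hkα : r ^ (k + 1 + α) = r ^ (k + α) * r := by
    rw [← Real.rpow_add_one hr.1.ne']; ring_nf
  have hp' : u r ^ p = u r ^ (p - 1) * u r := by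
    rw [← Real.rpow_add_one (hupos r hr).ne']; ring_nf
  refine ((hflux.const_mul ((2 + α) / (p - 1) + 1 - k)).sub hpow).congr_of_eventuallyEq ?_
    |>.congr_deriv ?_
  · filter_upwards [Ioo_mem_nhds hr.1 hr.2] with s hs
    exact rpow_mul_deriv_henonScaling hu hODE hs
  · rw [show k + 1 + α - 1 = k + α by ring, hkα, hp']
    simp only [henonScaling]
    linear_combination (r ^ (k + α) * u r ^ (p - 1) * u r) * hc

theorem deriv_one_neg_of_henon (hk : 0 < k) (hu : ContDiff ℝ 2 u)
    (hODE : ∀ r ∈ Ioo (0:ℝ) 1, deriv (fun s => s ^ k * deriv u s) r = -(r ^ (k + α) * u r ^ p))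
    (hupos : ∀ r ∈ Ioo (0:ℝ) 1, 0 < u r) :
    deriv u 1 < 0 := by
  have hanti : StrictAntiOn (fun s => s ^ k * deriv u s) (Icc 0 1) := by
    refine strictAntiOn_of_deriv_neg (convex_Icc 0 1)
      (continuous_rpow_mul_deriv_s12 hk.le (hu.of_le (by norm_num))).continuousOn fun r hr => ?_
    rw [interior_Icc] at hr
    rw [hODE r hr, neg_lt_zero]
    exact mul_pos (Real.rpow_pos_of_pos hr.1 _) (Real.rpow_pos_of_pos (hupos r hr) _)
  simpa [Real.zero_rpow hk.ne'] using
    hanti (left_mem_Icc.2 zero_le_one) (right_mem_Icc.2 zero_le_one) zero_lt_one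

theorem deriv_one_eq_zero_of_linearized (hk : 0 < k) (hp : 1 < p) (hu : ContDiff ℝ 2 u)
    (hODE : ∀ r ∈ Ioo (0:ℝ) 1, deriv (fun s => s ^ k * deriv u s) r = -(r ^ (k + α) * u r ^ p))
    (hu1 : u 1 = 0) (hupos : ∀ r ∈ Ioo (0:ℝ) 1, 0 < u r) {v : ℝ → ℝ} (hv : ContDiff ℝ 2 v)
    (hvODE : ∀ r ∈ Ioo (0:ℝ) 1,
      deriv (fun s => s ^ k * deriv v s) r = -(p * r ^ (k + α) * u r ^ (p - 1) * v r))
    (hv1 : v 1 = 0) : deriv v 1 = 0 := by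
  set z := henonScaling α p u
  have hz := contDiff_henonScaling (α := α) (p := p) hu
  set W : ℝ → ℝ := fun s => z s * (s ^ k * deriv v s) - v s * (s ^ k * deriv z s)
  have hW_cont : Continuous W :=
    (hz.continuous.mul (continuous_rpow_mul_deriv_s12 hk.le (hv.of_le (by norm_num)))).sub
      (hv.continuous.mul (continuous_rpow_mul_deriv_s12 hk.le hz))
  have hW' : ∀ r ∈ Ioo (0:ℝ) 1, HasDerivAt W 0 r := fun r hr =>
    hasDerivAt_wronskian (hz.differentiable one_ne_zero r).hasDerivAt
      (hv.differentiable (by norm_num) r).hasDerivAt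
      (hasDerivAt_rpow_mul_deriv_henonScaling hp hu hODE hupos hr)
      (hasDerivAt_rpow_mul_deriv_of_deriv_eq hv hr.1 (hvODE r hr)) rfl rfl
  obtain ⟨_, _, hslope⟩ := exists_hasDerivAt_eq_slope W (fun _ => 0) zero_lt_one
    hW_cont.continuousOn hW'
  have hz1 : z 1 = deriv u 1 := by simp [z, henonScaling, hu1]
  have hW1 : W 1 = deriv u 1 * deriv v 1 := by simp [W, hz1, hv1]
  have hW0 : W 0 = 0 := by simp [W, Real.zero_rpow hk.ne']
  rw [hW0, hW1, sub_zero, sub_zero, div_one, eq_comm, mul_eq_zero] at hslope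
  exact hslope.resolve_left (deriv_one_neg_of_henon hk hu hODE hupos).ne

theorem eqOn_zero_of_linearized (hk : 0 < k) (hp : 1 < p) (hu : ContDiff ℝ 2 u)
    (hODE : ∀ r ∈ Ioo (0:ℝ) 1, deriv (fun s => s ^ k * deriv u s) r = -(r ^ (k + α) * u r ^ p))
    (hu1 : u 1 = 0) (hupos : ∀ r ∈ Ioo (0:ℝ) 1, 0 < u r) {v : ℝ → ℝ} (hv : ContDiff ℝ 2 v)
    (hvODE : ∀ r ∈ Ioo (0:ℝ) 1,
      deriv (fun s => s ^ k * deriv v s) r = -(p * r ^ (k + α) * u r ^ (p - 1) * v r))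
    (hv1 : v 1 = 0) : ∀ r ∈ Icc (0:ℝ) 1, v r = 0 := by
  have hv'1 := deriv_one_eq_zero_of_linearized hk hp hu hODE hu1 hupos hv hvODE hv1
  have hpos : ∀ t ∈ Ioc (0:ℝ) 1, v t = 0 := by
    intro t ht
    have hs_pos : ∀ s ∈ Icc t 1, 0 < s := fun s hs => ht.1.trans_le hs.1
    refine eqOn_zero_of_hasDerivAt_linear_system (a := fun s => s ^ (-k))
      (q := fun s => -(p * s ^ (k + α) * u s ^ (p - 1)))
      (continuousOn_id.rpow_const fun s hs => Or.inl (hs_pos s hs).ne')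
      ((continuousOn_const.mul
          (continuousOn_id.rpow_const fun s hs => Or.inl (hs_pos s hs).ne')).mul
        (hu.continuous.continuousOn.rpow_const fun _ _ => Or.inr (by linarith))).neg
      hv.continuous.continuousOn
      (continuous_rpow_mul_deriv_s12 hk.le (hv.of_le (by norm_num))).continuousOn
      (fun s hs => ?_) (fun s hs => ?_) hv1 (by simp [hv'1]) t (left_mem_Icc.2 ht.2)
    · have hs0 : 0 < s := ht.1.trans hs.1
      refine (hv.differentiable (by norm_num) s).hasDerivAt.congr_deriv ?_
      rw [Real.rpow_neg hs0.le, inv_mul_cancel_left₀ (Real.rpow_pos_of_pos hs0 k).ne']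
    · refine (hasDerivAt_rpow_mul_deriv_of_deriv_eq hv (ht.1.trans hs.1)
        (hvODE s ⟨ht.1.trans hs.1, hs.2⟩)).congr_deriv ?_
      ring
  exact fun r hr => EqOn.of_subset_closure (s := Ioc 0 1) hpos hv.continuous.continuousOn
    continuousOn_const Ioc_subset_Icc_self (by rw [closure_Ioc zero_ne_one]) hr

end Henon

theorem stmt_12_general (N : ℕ) (hN : 3 ≤ N) (α p : ℝ) (hp : 1 < p)
    (u : ℝ → ℝ) (hu : ContDiff ℝ 2 u)
    (hODE : ∀ r ∈ Ioo (0:ℝ) 1,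
      deriv (fun s => s ^ ((N:ℝ) - 1) * deriv u s) r = -(r ^ ((N:ℝ) - 1 + α) * u r ^ p))
    (hu1 : u 1 = 0)
    (hupos : ∀ r ∈ Ico (0:ℝ) 1, 0 < u r) :
    ∀ v : ℝ → ℝ, ContDiff ℝ 2 v →
      (∀ r ∈ Ioo (0:ℝ) 1,
        deriv (fun s => s ^ ((N:ℝ) - 1) * deriv v s) r
          = -(p * r ^ ((N:ℝ) - 1 + α) * u r ^ (p - 1) * v r)) →
      deriv v 0 = 0 → v 1 = 0 → ∀ r ∈ Icc (0:ℝ) 1, v r = 0 := by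
  intro v hv hvODE _ hv1
  have hk : (0:ℝ) < N - 1 := by
    have : (3:ℝ) ≤ N := by exact_mod_cast hN
    linarith
  exact eqOn_zero_of_linearized hk hp hu hODE hu1 (fun r hr => hupos r (Ioo_subset_Ico_self hr))
    hv hvODE hv1

theorem stmt_12 (N : ℕ) (hN : 3 ≤ N) (α p : ℝ) (hα : 0 < α) (hp : 1 < p)
    (hpα : p < ((N : ℝ) + 2 + 2 * α) / ((N : ℝ) - 2))
    (u : ℝ → ℝ) (hu : ContDiff ℝ 2 u)
    (hODE : ∀ r ∈ Ioo (0:ℝ) 1,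
      deriv (fun s => s ^ ((N:ℝ) - 1) * deriv u s) r = -(r ^ ((N:ℝ) - 1 + α) * u r ^ p))
    (hu'0 : deriv u 0 = 0) (hu1 : u 1 = 0)
    (hupos : ∀ r ∈ Ico (0:ℝ) 1, 0 < u r) :
    ∀ v : ℝ → ℝ, ContDiff ℝ 2 v →
      (∀ r ∈ Ioo (0:ℝ) 1,
        deriv (fun s => s ^ ((N:ℝ) - 1) * deriv v s) r
          = -(p * r ^ ((N:ℝ) - 1 + α) * u r ^ (p - 1) * v r)) →
      deriv v 0 = 0 → v 1 = 0 → ∀ r ∈ Icc (0:ℝ) 1, v r = 0 :=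
  stmt_12_general N hN α p hp u hu hODE hu1 hupos
end

section
/- Let 0 < α ≤ 1, N ≥ 3, 1 < p < (N+2+2α)/(N-2), let u_p be the positive radial solution of the Henon equation, and let Λ_{1,2}(p) be the first eigenvalue of -(r^{N-1}ψ')' + 2N r^{N-3} ψ = Λ p r^{N-1+α} u_p^{p-1} ψ with ψ(0)=0, ψ(1)=0 (the mode k=2 with μ₂ = 2N). Then Λ_{1,2}(p) > 1. -/
/-!
Write `w = -u'` and `I = r^{n-1} w`; then `I' = r^{n-1+α} u^p`, so `I > 0` and `u` decreases.
Through the equation, `G = r^{n-1} w' = r^{n-1+α}u^p - (n-1) r^{n-2} w`, and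
`G' = α r^{n-2+α}u^p - p r^{n-1+α}u^{p-1} w + (n-1) r^{n-3} w` needs no third derivative of `u`.
Picone's identity `(G v²/w)' = r^{n-1} v'² + (G'/w) v² - r^{n-1} (v' - w' v/w)²`, integrated over
`(0,1)` (the boundary terms vanish since `|G| ≤ (2n-1+α) w`), bounds the quadratic form of the mode
`k = 2` below by `∫ (2n r^{n-3} + G'/w) v²`. Hence it is at least `1 + ε` times
`p ∫ r^{n-1+α}u^{p-1} v²` as soon as `α r^{n+α}u^p + ε p r^{2+α}u^{p-1} I ≤ (n+1) I`.
As `α(n+α) ≤ n+1`, this follows from a lower bound on `J = (n+α) I - r^{n+α}u^p`, the paper's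
`(n+α) I (1 - g)`: `J(0) = 0` and `J' = p r^{1+α}u^{p-1} I`, and comparing derivatives gives
`J ≥ p/(n+2+2α) · r^{2+α}u^{p-1} I`. This yields `ε = (n+1)/((n+α)(n+2+2α)) > 0`.
-/

open Set intervalIntegral Filter Topology MeasureTheory

theorem monotoneOn_Icc_of_hasDerivAt_nonneg {φ φ' : ℝ → ℝ} {a b : ℝ}
    (hφ : ContinuousOn φ (Icc a b)) (hφ' : ∀ x ∈ Ioo a b, HasDerivAt φ (φ' x) x)
    (hnonneg : ∀ x ∈ Ioo a b, 0 ≤ φ' x) : MonotoneOn φ (Icc a b) :=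
  monotoneOn_of_hasDerivWithinAt_nonneg (convex_Icc a b) hφ
    (fun x hx => (hφ' x (by rwa [interior_Icc] at hx)).hasDerivWithinAt)
    (fun x hx => hnonneg x (by rwa [interior_Icc] at hx))

theorem hasDerivAt_picone_s13 {G w v : ℝ → ℝ} {G' w' v' ρ x : ℝ} (hG : HasDerivAt G G' x)
    (hw : HasDerivAt w w' x) (hv : HasDerivAt v v' x) (hwx : w x ≠ 0) (hGx : G x = ρ * w') :
    HasDerivAt (fun y => G y * v y ^ 2 / w y)
      (ρ * v' ^ 2 + G' / w x * v x ^ 2 - ρ * (v' - w' / w x * v x) ^ 2) x := by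
  refine ((hG.mul (hv.pow 2)).div hw hwx).congr_deriv ?_
  simp only [Pi.mul_apply, Pi.pow_apply, hGx]
  field_simp
  ring

theorem rpow_eq_rpow_mul_rpow {r a b c : ℝ} (hr : 0 < r) (h : a = b + c) :
    r ^ a = r ^ b * r ^ c := by
  rw [h, Real.rpow_add hr]

noncomputable def radialFlux (n : ℝ) (u : ℝ → ℝ) (r : ℝ) : ℝ := -(r ^ (n - 1) * deriv u r)

noncomputable def fluxDefect (n α p : ℝ) (u : ℝ → ℝ) (r : ℝ) : ℝ :=
  (n + α) * radialFlux n u r - r ^ (n + α) * u r ^ p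

/-- `r^{n-1} (-u')'` rewritten through the equation, so that it is differentiable for `u ∈ C²`. -/
noncomputable def derivFlux (n α p : ℝ) (u : ℝ → ℝ) (r : ℝ) : ℝ :=
  r ^ (n - 1 + α) * u r ^ p + (n - 1) * r ^ (n - 2) * deriv u r

theorem radialFlux_zero {n : ℝ} (u : ℝ → ℝ) (hn : 1 < n) : radialFlux n u 0 = 0 := by
  simp [radialFlux, Real.zero_rpow (by linarith : n - 1 ≠ 0)]

theorem fluxDefect_zero {n α : ℝ} (p : ℝ) (u : ℝ → ℝ) (hn : 1 < n) (hα : 0 ≤ α) :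
    fluxDefect n α p u 0 = 0 := by
  simp [fluxDefect, radialFlux_zero u hn, Real.zero_rpow (by linarith : n + α ≠ 0)]

noncomputable def henonGap (n α : ℝ) : ℝ := (n + 1) / ((n + α) * (n + 2 + 2 * α))

structure IsHenonRadialSolution (n α p : ℝ) (u : ℝ → ℝ) : Prop where
  contDiff : ContDiff ℝ 2 u
  ode : ∀ r ∈ Ioo (0:ℝ) 1,
    deriv (fun s => s ^ (n - 1) * deriv u s) r = -(r ^ (n - 1 + α) * u r ^ p)
  pos : ∀ r ∈ Ico (0:ℝ) 1, 0 < u r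
  boundary : u 1 = 0

namespace IsHenonRadialSolution

variable {n α p : ℝ} {u : ℝ → ℝ}

theorem nonneg (hu : IsHenonRadialSolution n α p u) {r : ℝ} (hr : r ∈ Icc (0:ℝ) 1) :
    0 ≤ u r := by
  rcases hr.2.eq_or_lt with rfl | hr1
  · exact hu.boundary.ge
  · exact (hu.pos r ⟨hr.1, hr1⟩).le

theorem continuous (hu : IsHenonRadialSolution n α p u) : Continuous u :=
  hu.contDiff.continuous

theorem differentiable (hu : IsHenonRadialSolution n α p u) : Differentiable ℝ u :=
  hu.contDiff.differentiable (by norm_num)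

theorem differentiable_deriv (hu : IsHenonRadialSolution n α p u) :
    Differentiable ℝ (deriv u) :=
  hu.contDiff.differentiable_deriv_two

theorem continuous_radialFlux (hu : IsHenonRadialSolution n α p u) (hn : 1 ≤ n) :
    Continuous (radialFlux n u) :=
  ((Real.continuous_rpow_const (by linarith)).mul hu.differentiable_deriv.continuous).neg

theorem hasDerivAt_radialFlux (hu : IsHenonRadialSolution n α p u) {r : ℝ} (hr : r ∈ Ioo (0:ℝ) 1) :
    HasDerivAt (radialFlux n u) (r ^ (n - 1 + α) * u r ^ p) r := by
  have hd : DifferentiableAt ℝ (fun s => s ^ (n - 1) * deriv u s) r :=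
    (Real.hasDerivAt_rpow_const (Or.inl hr.1.ne')).differentiableAt.mul
      (hu.differentiable_deriv r)
  have h := hd.hasDerivAt.neg
  rw [hu.ode r hr, neg_neg] at h
  exact h

theorem radialFlux_pos (hu : IsHenonRadialSolution n α p u) (hn : 1 < n) {r : ℝ}
    (hr : r ∈ Ioc (0:ℝ) 1) : 0 < radialFlux n u r := by
  have hmono : StrictMonoOn (radialFlux n u) (Icc 0 1) := by
    refine strictMonoOn_of_deriv_pos (convex_Icc 0 1) (hu.continuous_radialFlux hn.le).continuousOn
      fun x hx => ?_
    rw [interior_Icc] at hx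
    rw [(hu.hasDerivAt_radialFlux hx).deriv]
    have := hu.pos x ⟨hx.1.le, hx.2⟩
    have := hx.1
    positivity
  simpa [radialFlux_zero u hn] using
    hmono (left_mem_Icc.2 zero_le_one) (Ioc_subset_Icc_self hr) hr.1

theorem deriv_lt_zero (hu : IsHenonRadialSolution n α p u) (hn : 1 < n) {r : ℝ}
    (hr : r ∈ Ioc (0:ℝ) 1) : deriv u r < 0 := by
  have h := hu.radialFlux_pos hn hr
  have : 0 < r ^ (n - 1) := Real.rpow_pos_of_pos hr.1 _
  unfold radialFlux at h
  nlinarith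

theorem antitoneOn (hu : IsHenonRadialSolution n α p u) (hn : 1 < n) :
    AntitoneOn u (Icc 0 1) :=
  antitoneOn_of_deriv_nonpos (convex_Icc 0 1) hu.continuous.continuousOn
    hu.differentiable.differentiableOn fun x hx => by
      rw [interior_Icc] at hx
      exact (hu.deriv_lt_zero hn ⟨hx.1, hx.2.le⟩).le

theorem continuous_rpow_const (hu : IsHenonRadialSolution n α p u) {q : ℝ} (hq : 0 ≤ q) :
    Continuous fun r => u r ^ q :=
  (Real.continuous_rpow_const hq).comp hu.continuous

theorem antitoneOn_rpow (hu : IsHenonRadialSolution n α p u) (hn : 1 < n) {q : ℝ} (hq : 0 ≤ q) :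
    AntitoneOn (fun r => u r ^ q) (Icc 0 1) := fun _ hs _ hr hsr =>
  Real.rpow_le_rpow (hu.nonneg hr) (hu.antitoneOn hn hs hr hsr) hq

theorem continuous_fluxDefect (hu : IsHenonRadialSolution n α p u) (hn : 1 < n) (hα : 0 ≤ α)
    (hp : 0 ≤ p) : Continuous (fluxDefect n α p u) :=
  (continuous_const.mul (hu.continuous_radialFlux hn.le)).sub
    ((Real.continuous_rpow_const (by linarith)).mul (hu.continuous_rpow_const hp))

theorem hasDerivAt_fluxDefect (hu : IsHenonRadialSolution n α p u) {r : ℝ}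
    (hr : r ∈ Ioo (0:ℝ) 1) :
    HasDerivAt (fluxDefect n α p u) (p * r ^ (1 + α) * u r ^ (p - 1) * radialFlux n u r) r := by
  have hpow := (Real.hasDerivAt_rpow_const (p := n + α) (Or.inl hr.1.ne')).mul
    ((hu.differentiable r).hasDerivAt.rpow_const (p := p) (Or.inl (hu.pos r ⟨hr.1.le, hr.2⟩).ne'))
  refine ((hu.hasDerivAt_radialFlux hr).const_mul (n + α) |>.sub hpow).congr_deriv ?_
  rw [show n + α - 1 = n - 1 + α by ring,
    rpow_eq_rpow_mul_rpow hr.1 (show n + α = 1 + α + (n - 1) by ring)]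
  unfold radialFlux
  ring

theorem fluxDefect_nonneg (hu : IsHenonRadialSolution n α p u) (hn : 1 < n) (hα : 0 ≤ α)
    (hp : 0 ≤ p) {r : ℝ} (hr : r ∈ Icc (0:ℝ) 1) : 0 ≤ fluxDefect n α p u r := by
  have hmono := monotoneOn_Icc_of_hasDerivAt_nonneg (hu.continuous_fluxDefect hn hα hp).continuousOn
    (fun s hs => hu.hasDerivAt_fluxDefect hs) fun s hs => by
      have := hu.radialFlux_pos hn ⟨hs.1, hs.2.le⟩
      have := hu.pos s ⟨hs.1.le, hs.2⟩
      have := hs.1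
      positivity
  simpa [fluxDefect_zero p u hn hα] using hmono (left_mem_Icc.2 zero_le_one) hr hr.1

theorem deriv_rpow_mul_radialFlux_le (hu : IsHenonRadialSolution n α p u) (hn : 1 < n)
    (hα : 0 ≤ α) (hp : 0 ≤ p) {s : ℝ} (hs : s ∈ Ioo (0:ℝ) 1) :
    deriv (fun t => t ^ (2 + α) * radialFlux n u t) s ≤
      (n + 2 + 2 * α) * (s ^ (1 + α) * radialFlux n u s) := by
  have hd : HasDerivAt (fun t => t ^ (2 + α) * radialFlux n u t)
      ((2 + α) * s ^ (2 + α - 1) * radialFlux n u s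
        + s ^ (2 + α) * (s ^ (n - 1 + α) * u s ^ p)) s :=
    (Real.hasDerivAt_rpow_const (Or.inl hs.1.ne')).mul (hu.hasDerivAt_radialFlux hs)
  rw [hd.deriv, show 2 + α - 1 = 1 + α by ring, ← mul_assoc,
    rpow_eq_rpow_mul_rpow hs.1 (show 2 + α = 1 + α + 1 by ring), mul_assoc (s ^ (1 + α)),
    ← rpow_eq_rpow_mul_rpow hs.1 (show n + α = 1 + (n - 1 + α) by ring)]
  have hK := hu.fluxDefect_nonneg hn hα hp (Ioo_subset_Icc_self hs)
  unfold fluxDefect at hK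
  have hA : 0 < s ^ (1 + α) := Real.rpow_pos_of_pos hs.1 _
  nlinarith [mul_le_mul_of_nonneg_left (sub_nonneg.1 hK) hA.le]

theorem le_fluxDefect (hu : IsHenonRadialSolution n α p u) (hn : 1 < n) (hα : 0 ≤ α)
    (hp : 1 ≤ p) {r : ℝ} (hr : r ∈ Icc (0:ℝ) 1) :
    p / (n + 2 + 2 * α) * r ^ (2 + α) * u r ^ (p - 1) * radialFlux n u r ≤
      fluxDefect n α p u r := by
  set c := p / (n + 2 + 2 * α) * u r ^ (p - 1) with hc
  have hd : ∀ s ∈ Ioo (0:ℝ) 1, HasDerivAt (fun t => t ^ (2 + α) * radialFlux n u t)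
      (deriv (fun t => t ^ (2 + α) * radialFlux n u t) s) s := fun s hs =>
    ((Real.hasDerivAt_rpow_const (Or.inl hs.1.ne')).mul
      (hu.hasDerivAt_radialFlux hs)).differentiableAt.hasDerivAt
  have hmono := monotoneOn_Icc_of_hasDerivAt_nonneg
    (φ := fun s => fluxDefect n α p u s - c * (s ^ (2 + α) * radialFlux n u s))
    ((hu.continuous_fluxDefect hn hα (by linarith)).sub (continuous_const.mul
      ((Real.continuous_rpow_const (by linarith)).mul
        (hu.continuous_radialFlux hn.le)))).continuousOn
    (fun s hs => (hu.hasDerivAt_fluxDefect ⟨hs.1, hs.2.trans_le hr.2⟩).sub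
      ((hd s ⟨hs.1, hs.2.trans_le hr.2⟩).const_mul c))
    fun s hs => by
      have hs1 : s ∈ Ioo (0:ℝ) 1 := ⟨hs.1, hs.2.trans_le hr.2⟩
      have hT := hu.deriv_rpow_mul_radialFlux_le hn hα (by linarith) hs1
      have hU : u r ^ (p - 1) ≤ u s ^ (p - 1) :=
        hu.antitoneOn_rpow hn (by linarith) ⟨hs.1.le, hs1.2.le⟩ hr hs.2.le
      have hUr : 0 ≤ u r ^ (p - 1) := Real.rpow_nonneg (hu.nonneg hr) _
      have hAI : 0 < s ^ (1 + α) * radialFlux n u s :=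
        mul_pos (Real.rpow_pos_of_pos hs.1 _) (hu.radialFlux_pos hn ⟨hs.1, hs1.2.le⟩)
      have hc' : c * ((n + 2 + 2 * α) * (s ^ (1 + α) * radialFlux n u s))
          = p * u r ^ (p - 1) * (s ^ (1 + α) * radialFlux n u s) := by
        rw [hc]; field_simp
      have h1 := mul_le_mul_of_nonneg_left hT (by positivity : 0 ≤ c)
      have h2 := mul_le_mul_of_nonneg_right (mul_le_mul_of_nonneg_left hU (by linarith : 0 ≤ p))
        hAI.le
      nlinarith
  have h := hmono (left_mem_Icc.2 hr.1) (right_mem_Icc.2 hr.1) hr.1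
  simp only [fluxDefect_zero p u hn hα, Real.zero_rpow (by linarith : 2 + α ≠ 0)] at h
  linarith

theorem add_henonGap_mul_le_radialFlux (hu : IsHenonRadialSolution n α p u) (hn : 1 < n)
    (hα : 0 ≤ α) (hα1 : α ≤ 1) (hp : 1 ≤ p) {r : ℝ} (hr : r ∈ Icc (0:ℝ) 1) :
    α * (r ^ (n + α) * u r ^ p)
        + henonGap n α * p * (r ^ (2 + α) * u r ^ (p - 1) * radialFlux n u r)
      ≤ (n + 1) * radialFlux n u r := by
  have hJ := hu.le_fluxDefect hn hα hp hr
  unfold fluxDefect at hJ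
  have hK : 0 ≤ r ^ (n + α) * u r ^ p :=
    mul_nonneg (Real.rpow_nonneg hr.1 _) (Real.rpow_nonneg (hu.nonneg hr) _)
  have hαn : α * (n + α) ≤ n + 1 := by nlinarith
  have hnα : 0 < n + α := by linarith
  have hgap : (n + α) * (henonGap n α * p) = (n + 1) * (p / (n + 2 + 2 * α)) := by
    unfold henonGap; field_simp
  have hX : (n + α) * (henonGap n α * p * (r ^ (2 + α) * u r ^ (p - 1) * radialFlux n u r))
      = (n + 1) * (p / (n + 2 + 2 * α) * r ^ (2 + α) * u r ^ (p - 1) * radialFlux n u r) := by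
    rw [← mul_assoc, ← mul_assoc, hgap]; ring
  rw [← mul_le_mul_iff_of_pos_left hnα]
  nlinarith [mul_le_mul_of_nonneg_right hαn hK,
    mul_le_mul_of_nonneg_left hJ (by linarith : 0 ≤ n + 1)]

theorem derivFlux_eq (hu : IsHenonRadialSolution n α p u) {r : ℝ} (hr : r ∈ Ioo (0:ℝ) 1) :
    derivFlux n α p u r = r ^ (n - 1) * -deriv (deriv u) r := by
  have hprod : HasDerivAt (fun s => s ^ (n - 1) * deriv u s)
      ((n - 1) * r ^ (n - 1 - 1) * deriv u r + r ^ (n - 1) * deriv (deriv u) r) r :=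
    (Real.hasDerivAt_rpow_const (Or.inl hr.1.ne')).mul (hu.differentiable_deriv r).hasDerivAt
  have hode := hu.ode r hr
  rw [hprod.deriv, show n - 1 - 1 = n - 2 by ring] at hode
  unfold derivFlux
  linear_combination hode

theorem hasDerivAt_derivFlux (hu : IsHenonRadialSolution n α p u) {r : ℝ}
    (hr : r ∈ Ioo (0:ℝ) 1) :
    HasDerivAt (derivFlux n α p u) (α * r ^ (n - 2 + α) * u r ^ p
      + p * r ^ (n - 1 + α) * u r ^ (p - 1) * deriv u r - (n - 1) * r ^ (n - 3) * deriv u r) r := by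
  have hG : HasDerivAt (derivFlux n α p u) _ r :=
    ((Real.hasDerivAt_rpow_const (p := n - 1 + α) (Or.inl hr.1.ne')).mul
      ((hu.differentiable r).hasDerivAt.rpow_const (p := p)
        (Or.inl (hu.pos r ⟨hr.1.le, hr.2⟩).ne'))).add
    (((Real.hasDerivAt_rpow_const (p := n - 2) (Or.inl hr.1.ne')).const_mul (n - 1)).mul
      (hu.differentiable_deriv r).hasDerivAt)
  refine hG.congr_deriv ?_
  have hr0 := hr.1
  have hu'' := hu.derivFlux_eq hr
  unfold derivFlux at hu''
  set X := r ^ (n - 3)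
  set Y := r ^ α
  have e1 : r ^ (n - 1 + α - 1) = X * Y * r := by
    rw [rpow_eq_rpow_mul_rpow hr0 (show n - 1 + α - 1 = n - 3 + α + 1 by ring),
      Real.rpow_add hr0, Real.rpow_one]
  have e2 : r ^ (n - 1 + α) = X * Y * r ^ 2 := by
    rw [rpow_eq_rpow_mul_rpow hr0 (show n - 1 + α = n - 3 + α + 2 by ring),
      Real.rpow_add hr0, Real.rpow_two]
  have e3 : r ^ (n - 2 + α) = X * Y * r := by
    rw [rpow_eq_rpow_mul_rpow hr0 (show n - 2 + α = n - 3 + α + 1 by ring),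
      Real.rpow_add hr0, Real.rpow_one]
  have e4 : r ^ (n - 2) = X * r := by
    rw [rpow_eq_rpow_mul_rpow hr0 (show n - 2 = n - 3 + 1 by ring), Real.rpow_one]
  have e5 : r ^ (n - 1) = X * r ^ 2 := by
    rw [rpow_eq_rpow_mul_rpow hr0 (show n - 1 = n - 3 + 2 by ring), Real.rpow_two]
  have e6 : r ^ (n - 2 - 1) = X := by rw [show n - 2 - 1 = n - 3 by ring]
  simp only [e1, e2, e3, e4, e5, e6] at hu'' ⊢
  apply mul_left_cancel₀ hr0.ne'
  linear_combination (n - 1) * hu''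

theorem deriv_derivFlux_le (hu : IsHenonRadialSolution n α p u) (hn : 1 < n) (hα : 0 ≤ α)
    (hα1 : α ≤ 1) (hp : 1 ≤ p) {r : ℝ} (hr : r ∈ Ioo (0:ℝ) 1) :
    deriv (derivFlux n α p u) r ≤
      (2 * n * r ^ (n - 3) - (1 + henonGap n α) * p * r ^ (n - 1 + α) * u r ^ (p - 1))
        * -deriv u r := by
  have hr0 := hr.1
  have key := hu.add_henonGap_mul_le_radialFlux hn hα hα1 hp (Ioo_subset_Icc_self hr)
  rw [(hu.hasDerivAt_derivFlux hr).deriv]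
  unfold radialFlux at key
  set X := r ^ (n - 3)
  set Y := r ^ α
  have e1 : r ^ (n + α) = X * Y * r ^ 3 := by
    rw [rpow_eq_rpow_mul_rpow hr0 (show n + α = n - 3 + α + 3 by ring),
      Real.rpow_add hr0, Real.rpow_ofNat]
  have e2 : r ^ (n - 1 + α) = X * Y * r ^ 2 := by
    rw [rpow_eq_rpow_mul_rpow hr0 (show n - 1 + α = n - 3 + α + 2 by ring),
      Real.rpow_add hr0, Real.rpow_two]
  have e3 : r ^ (n - 2 + α) = X * Y * r := by
    rw [rpow_eq_rpow_mul_rpow hr0 (show n - 2 + α = n - 3 + α + 1 by ring),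
      Real.rpow_add hr0, Real.rpow_one]
  have e4 : r ^ (2 + α) = Y * r ^ 2 := by
    rw [rpow_eq_rpow_mul_rpow hr0 (show 2 + α = α + 2 by ring), Real.rpow_two]
  have e5 : r ^ (n - 1) = X * r ^ 2 := by
    rw [rpow_eq_rpow_mul_rpow hr0 (show n - 1 = n - 3 + 2 by ring), Real.rpow_two]
  simp only [e1, e2, e3, e4, e5] at key ⊢
  rw [← mul_le_mul_iff_of_pos_left (pow_pos hr0 2)]
  linear_combination key

theorem abs_derivFlux_le (hu : IsHenonRadialSolution n α p u) (hn : 2 ≤ n) (hα : 0 ≤ α)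
    (hp : 0 ≤ p) {r : ℝ} (hr : r ∈ Ioc (0:ℝ) 1) :
    |derivFlux n α p u r| ≤ (2 * n - 1 + α) * -deriv u r := by
  have hr0 := hr.1
  have hw := hu.deriv_lt_zero (by linarith) hr
  have hJ := hu.fluxDefect_nonneg (by linarith) hα hp (Ioc_subset_Icc_self hr)
  unfold fluxDefect radialFlux at hJ
  rw [rpow_eq_rpow_mul_rpow hr0 (show n + α = n - 1 + α + 1 by ring),
    rpow_eq_rpow_mul_rpow hr0 (show n - 1 = n - 2 + 1 by ring), Real.rpow_one] at hJ
  have hA : 0 ≤ r ^ (n - 1 + α) * u r ^ p :=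
    mul_nonneg (Real.rpow_nonneg hr0.le _) (Real.rpow_nonneg (hu.nonneg (Ioc_subset_Icc_self hr)) _)
  have hA' : r ^ (n - 1 + α) * u r ^ p ≤ (n + α) * (r ^ (n - 2) * -deriv u r) := by
    nlinarith
  have hR : r ^ (n - 2) ≤ 1 := Real.rpow_le_one hr0.le hr.2 (by linarith)
  have hB : 0 ≤ r ^ (n - 2) * -deriv u r := mul_nonneg (Real.rpow_nonneg hr0.le _) (by linarith)
  have hB' : r ^ (n - 2) * -deriv u r ≤ -deriv u r := by nlinarith
  unfold derivFlux
  rw [abs_le]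
  constructor <;> nlinarith

theorem continuous_derivFlux (hu : IsHenonRadialSolution n α p u) (hn : 2 ≤ n) (hα : 0 ≤ α)
    (hp : 0 ≤ p) : Continuous (derivFlux n α p u) :=
  ((Real.continuous_rpow_const (by linarith)).mul (hu.continuous_rpow_const hp)).add
    ((continuous_const.mul (Real.continuous_rpow_const (by linarith))).mul
      hu.differentiable_deriv.continuous)

theorem continuousOn_derivFlux_mul_div (hu : IsHenonRadialSolution n α p u) (hn : 2 ≤ n)
    (hα : 0 ≤ α) (hp : 0 ≤ p) {v : ℝ → ℝ} (hv : Continuous v) (hv0 : v 0 = 0) :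
    ContinuousOn (fun r => derivFlux n α p u r * v r ^ 2 / -deriv u r) (Icc 0 1) := by
  intro x hx
  rcases hx.1.eq_or_lt with rfl | hx0
  · have hbound : ∀ r ∈ Icc (0:ℝ) 1,
        ‖derivFlux n α p u r * v r ^ 2 / -deriv u r‖ ≤ (2 * n - 1 + α) * v r ^ 2 := by
      intro r hr
      rcases hr.1.eq_or_lt with rfl | hr0
      · simp [hv0]
      have hw := hu.deriv_lt_zero (by linarith) ⟨hr0, hr.2⟩
      rw [Real.norm_eq_abs, abs_div, abs_mul, abs_of_nonneg (sq_nonneg (v r)),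
        abs_of_pos (neg_pos.2 hw), div_le_iff₀ (neg_pos.2 hw)]
      nlinarith [hu.abs_derivFlux_le hn hα hp ⟨hr0, hr.2⟩, sq_nonneg (v r)]
    have hlim : Tendsto (fun r => (2 * n - 1 + α) * v r ^ 2) (𝓝[Icc 0 1] 0) (𝓝 0) := by
      simpa [hv0] using ((hv.tendsto 0).pow 2).const_mul (2 * n - 1 + α) |>.mono_left
        nhdsWithin_le_nhds
    simpa [ContinuousWithinAt, hv0] using
      squeeze_zero_norm' (eventually_nhdsWithin_of_forall hbound) hlim
  · have hw := hu.deriv_lt_zero (by linarith) ⟨hx0, hx.2⟩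
    exact (((hu.continuous_derivFlux hn hα hp).continuousAt.mul
      (hv.continuousAt.pow 2)).div hu.differentiable_deriv.continuous.continuousAt.neg
      (by simpa using hw.ne)).continuousWithinAt

theorem integral_weight_nonneg (hu : IsHenonRadialSolution n α p u) (v : ℝ → ℝ) :
    0 ≤ ∫ r in (0:ℝ)..1, r ^ (n - 1 + α) * u r ^ (p - 1) * v r ^ 2 :=
  intervalIntegral.integral_nonneg zero_le_one fun _ hr =>
    mul_nonneg (mul_nonneg (Real.rpow_nonneg hr.1 _) (Real.rpow_nonneg (hu.nonneg hr) _))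
      (sq_nonneg _)

theorem integral_weight_pos (hu : IsHenonRadialSolution n α p u) (hn : 1 ≤ n) (hα : 0 ≤ α)
    (hp : 1 ≤ p) {v : ℝ → ℝ} (hv : Continuous v) (hv0 : ∀ r ∈ Ioo (0:ℝ) 1, v r ≠ 0) :
    0 < ∫ r in (0:ℝ)..1, r ^ (n - 1 + α) * u r ^ (p - 1) * v r ^ 2 := by
  refine intervalIntegral.intervalIntegral_pos_of_pos_on
    ((((Real.continuous_rpow_const (by linarith)).mul
      (hu.continuous_rpow_const (by linarith))).mul (hv.pow 2)).intervalIntegrable _ _)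
    (fun r hr => ?_) zero_lt_one
  have := hu.pos r ⟨hr.1.le, hr.2⟩
  have := hv0 r hr
  have := hr.1
  positivity

theorem exists_hasDerivAt_picone_le (hu : IsHenonRadialSolution n α p u) (hn : 1 < n)
    (hα : 0 ≤ α) (hα1 : α ≤ 1) (hp : 1 ≤ p) {v : ℝ → ℝ} (hv : Differentiable ℝ v) {r : ℝ}
    (hr : r ∈ Ioo (0:ℝ) 1) :
    ∃ d, HasDerivAt (fun s => derivFlux n α p u s * v s ^ 2 / -deriv u s) d r ∧
      d ≤ r ^ (n - 1) * deriv v r ^ 2 + 2 * n * (r ^ (n - 3) * v r ^ 2)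
        - (1 + henonGap n α) * p * (r ^ (n - 1 + α) * u r ^ (p - 1) * v r ^ 2) := by
  have hw := neg_pos.2 (hu.deriv_lt_zero hn ⟨hr.1, hr.2.le⟩)
  refine ⟨_, hasDerivAt_picone_s13 (hu.hasDerivAt_derivFlux hr).differentiableAt.hasDerivAt
    (hu.differentiable_deriv r).hasDerivAt.neg (hv r).hasDerivAt hw.ne' (hu.derivFlux_eq hr), ?_⟩
  have hG := (div_le_iff₀ hw).2 (hu.deriv_derivFlux_le hn hα hα1 hp hr)
  have hρ : 0 ≤ r ^ (n - 1) := Real.rpow_nonneg hr.1.le _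
  nlinarith [mul_le_mul_of_nonneg_right hG (sq_nonneg (v r)),
    mul_nonneg hρ (sq_nonneg (deriv v r - -deriv (deriv u) r / -deriv u r * v r))]

theorem rayleigh_lower_bound (hu : IsHenonRadialSolution n α p u) (hn : 3 ≤ n) (hα : 0 ≤ α)
    (hα1 : α ≤ 1) (hp : 1 ≤ p) {v : ℝ → ℝ} (hv : ContDiff ℝ 1 v) (hv0 : v 0 = 0)
    (hv1 : v 1 = 0) :
    (1 + henonGap n α) * (p * ∫ r in (0:ℝ)..1, r ^ (n - 1 + α) * u r ^ (p - 1) * v r ^ 2) ≤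
      (∫ r in (0:ℝ)..1, r ^ (n - 1) * deriv v r ^ 2)
        + 2 * n * ∫ r in (0:ℝ)..1, r ^ (n - 3) * v r ^ 2 := by
  have c1 : Continuous fun r => r ^ (n - 1) * deriv v r ^ 2 :=
    (Real.continuous_rpow_const (by linarith)).mul ((hv.continuous_deriv le_rfl).pow 2)
  have c2 : Continuous fun r => r ^ (n - 3) * v r ^ 2 :=
    (Real.continuous_rpow_const (by linarith)).mul (hv.continuous.pow 2)
  have c3 : Continuous fun r => r ^ (n - 1 + α) * u r ^ (p - 1) * v r ^ 2 :=
    ((Real.continuous_rpow_const (by linarith)).mul (hu.continuous_rpow_const (by linarith))).mul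
      (hv.continuous.pow 2)
  have hE : Continuous fun r => r ^ (n - 1) * deriv v r ^ 2 + 2 * n * (r ^ (n - 3) * v r ^ 2)
      - (1 + henonGap n α) * p * (r ^ (n - 1 + α) * u r ^ (p - 1) * v r ^ 2) :=
    (c1.add (continuous_const.mul c2)).sub (continuous_const.mul c3)
  choose! d hd hdle using fun r (hr : r ∈ Ioo (0:ℝ) 1) =>
    hu.exists_hasDerivAt_picone_le (by linarith) hα hα1 hp (hv.differentiable one_ne_zero) hr
  have hpicone := intervalIntegral.sub_le_integral_of_hasDeriv_right_of_le zero_le_one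
    (hu.continuousOn_derivFlux_mul_div (by linarith) hα (by linarith) hv.continuous hv0)
    (fun r hr => (hd r hr).hasDerivWithinAt)
    hE.integrableOn_Icc hdle
  have i1 : IntervalIntegrable (fun r => r ^ (n - 1) * deriv v r ^ 2) volume 0 1 :=
    c1.intervalIntegrable _ _
  have i2 : IntervalIntegrable (fun r => 2 * n * (r ^ (n - 3) * v r ^ 2)) volume 0 1 :=
    (continuous_const.mul c2).intervalIntegrable _ _
  have i3 : IntervalIntegrable
      (fun r => (1 + henonGap n α) * p * (r ^ (n - 1 + α) * u r ^ (p - 1) * v r ^ 2)) volume 0 1 :=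
    (continuous_const.mul c3).intervalIntegrable _ _
  rw [intervalIntegral.integral_sub (i1.add i2) i3, intervalIntegral.integral_add i1 i2,
    intervalIntegral.integral_const_mul, intervalIntegral.integral_const_mul] at hpicone
  simp only [hv0, hv1, zero_pow two_ne_zero, mul_zero, zero_div, sub_zero] at hpicone
  linarith

end IsHenonRadialSolution

theorem stmt_13_general (N : ℕ) (hN : 3 ≤ N) (α p : ℝ) (hα : 0 < α) (hα1 : α ≤ 1) (hp : 1 < p)
    (u : ℝ → ℝ) (hu : ContDiff ℝ 2 u)
    (hODE : ∀ r ∈ Ioo (0:ℝ) 1,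
      deriv (fun s => s ^ ((N:ℝ) - 1) * deriv u s) r = -(r ^ ((N:ℝ) - 1 + α) * u r ^ p))
    (hu1 : u 1 = 0)
    (hupos : ∀ r ∈ Ico (0:ℝ) 1, 0 < u r) :
    1 < sInf { q : ℝ | ∃ v : ℝ → ℝ, ContDiff ℝ 1 v ∧ v 0 = 0 ∧ v 1 = 0 ∧
      (∫ r in (0:ℝ)..1, r ^ ((N:ℝ) - 1 + α) * u r ^ (p - 1) * v r ^ 2) ≠ 0 ∧
      q = ((∫ r in (0:ℝ)..1, r ^ ((N:ℝ) - 1) * (deriv v r) ^ 2)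
            + 2 * (N : ℝ) * (∫ r in (0:ℝ)..1, r ^ ((N:ℝ) - 3) * v r ^ 2))
          / (p * ∫ r in (0:ℝ)..1, r ^ ((N:ℝ) - 1 + α) * u r ^ (p - 1) * v r ^ 2) } := by
  have hsol : IsHenonRadialSolution N α p u := ⟨hu, hODE, hupos, hu1⟩
  have hn : (3:ℝ) ≤ N := by exact_mod_cast hN
  have hgap : 0 < henonGap N α := by unfold henonGap; positivity
  refine (lt_add_of_pos_right 1 hgap).trans_le (le_csInf ?_ ?_)
  · refine ⟨_, fun r => r * (1 - r), by fun_prop, by simp, by simp,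
      (hsol.integral_weight_pos (by linarith) hα.le hp.le (by fun_prop)
        fun r hr => mul_ne_zero hr.1.ne' (by linarith [hr.2])).ne', rfl⟩
  · rintro q ⟨v, hv, hv0, hv1, hD, rfl⟩
    have hDpos := (hsol.integral_weight_nonneg v).lt_of_ne' hD
    rw [le_div_iff₀ (by positivity)]
    linarith [hsol.rayleigh_lower_bound hn hα.le hα1 hp.le hv hv0 hv1]

theorem stmt_13 (N : ℕ) (hN : 3 ≤ N) (α p : ℝ) (hα : 0 < α) (hα1 : α ≤ 1) (hp : 1 < p)
    (hpα : p < ((N : ℝ) + 2 + 2 * α) / ((N : ℝ) - 2))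
    (u : ℝ → ℝ) (hu : ContDiff ℝ 2 u)
    (hODE : ∀ r ∈ Ioo (0:ℝ) 1,
      deriv (fun s => s ^ ((N:ℝ) - 1) * deriv u s) r = -(r ^ ((N:ℝ) - 1 + α) * u r ^ p))
    (hu'0 : deriv u 0 = 0) (hu1 : u 1 = 0)
    (hupos : ∀ r ∈ Ico (0:ℝ) 1, 0 < u r) :
    1 < sInf { q : ℝ | ∃ v : ℝ → ℝ, ContDiff ℝ 1 v ∧ v 0 = 0 ∧ v 1 = 0 ∧
      (∫ r in (0:ℝ)..1, r ^ ((N:ℝ) - 1 + α) * u r ^ (p - 1) * v r ^ 2) ≠ 0 ∧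
      q = ((∫ r in (0:ℝ)..1, r ^ ((N:ℝ) - 1) * (deriv v r) ^ 2)
            + 2 * (N : ℝ) * (∫ r in (0:ℝ)..1, r ^ ((N:ℝ) - 3) * v r ^ 2))
          / (p * ∫ r in (0:ℝ)..1, r ^ ((N:ℝ) - 1 + α) * u r ^ (p - 1) * v r ^ 2) } :=
  stmt_13_general N hN α p hα hα1 hp u hu hODE hu1 hupos
end

section
/- Let u_p be the positive radial solution of the Henon equation in the unit ball, N ≥ 3, 0 < α ≤ 1, and fix a smooth cutoff φ with φ ≡ 1 on [0,1/3], φ ≡ 0 on [2/3,1]. Then the first eigenvalue Λ_{1,1}(p) of -(r^{N-1}ψ')' + (N-1)r^{N-3}ψ = Λ p r^{N-1+α}u_p^{p-1}ψ (ψ(0)=ψ(1)=0) satisfies Λ_{1,1}(p) ≤ 1 + (∫₀¹ r^{N-1}(u_p'φ')² dr + α∫₀¹ r^{N-2+α}u_p^p u_p' φ² dr)/(p∫₀¹ r^{N-1+α}u_p^{p-1}(u_p'φ)² dr). -/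
open Set intervalIntegral

theorem stmt_19 (N : ℕ) (hN : 3 ≤ N) (α p : ℝ) (hα : 0 < α) (hα1 : α ≤ 1) (hp : 1 < p)
    (hpα : p < ((N : ℝ) + 2 + 2 * α) / ((N : ℝ) - 2))
    (u : ℝ → ℝ) (hu : ContDiff ℝ 2 u)
    (hODE : ∀ r ∈ Ioo (0:ℝ) 1,
      deriv (fun s => s ^ ((N:ℝ) - 1) * deriv u s) r = -(r ^ ((N:ℝ) - 1 + α) * u r ^ p))
    (hu'0 : deriv u 0 = 0) (hu1 : u 1 = 0)
    (hupos : ∀ r ∈ Ico (0:ℝ) 1, 0 < u r)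
    (φ : ℝ → ℝ) (hφ : ContDiff ℝ (⊤ : ℕ∞) φ)
    (hφ1 : ∀ r ∈ Icc (0:ℝ) (1/3), φ r = 1) (hφ0 : ∀ r ∈ Icc (2/3 : ℝ) 1, φ r = 0) :
    sInf { q : ℝ | ∃ v : ℝ → ℝ, ContDiff ℝ 1 v ∧ v 0 = 0 ∧ v 1 = 0 ∧
      (∫ r in (0:ℝ)..1, r ^ ((N:ℝ) - 1 + α) * u r ^ (p - 1) * v r ^ 2) ≠ 0 ∧
      q = ((∫ r in (0:ℝ)..1, r ^ ((N:ℝ) - 1) * (deriv v r) ^ 2)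
            + ((N : ℝ) - 1) * (∫ r in (0:ℝ)..1, r ^ ((N:ℝ) - 3) * v r ^ 2))
          / (p * ∫ r in (0:ℝ)..1, r ^ ((N:ℝ) - 1 + α) * u r ^ (p - 1) * v r ^ 2) }
    ≤ 1 + ((∫ r in (0:ℝ)..1, r ^ ((N:ℝ) - 1) * (deriv u r * deriv φ r) ^ 2)
          + α * ∫ r in (0:ℝ)..1, r ^ ((N:ℝ) - 2 + α) * u r ^ p * deriv u r * φ r ^ 2)
        / (p * ∫ r in (0:ℝ)..1, r ^ ((N:ℝ) - 1 + α) * u r ^ (p - 1) * (deriv u r * φ r) ^ 2) := by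
  have hN3 : (3:ℝ) ≤ (N:ℝ) := by exact_mod_cast hN
  have hp0 : (0:ℝ) < p := by linarith
  have hp1 : (0:ℝ) < p - 1 := by linarith
  have hdu : Differentiable ℝ u := hu.differentiable (by norm_num)
  have hw1 : ContDiff ℝ 1 (deriv u) := by
    have h2 : ContDiff ℝ (1+1) u := by norm_num; exact hu
    exact (contDiff_succ_iff_deriv.mp h2).2.2
  have hdw : Differentiable ℝ (deriv u) := hw1.differentiable (by norm_num)
  have hwc : Continuous (deriv u) := hdw.continuous
  have hw'c : Continuous (deriv (deriv u)) := hw1.continuous_deriv le_rfl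
  have hφ1' : ContDiff ℝ 1 φ := hφ.of_le (by simp)
  have hdφ : Differentiable ℝ φ := hφ1'.differentiable (by norm_num)
  have hφc : Continuous φ := hdφ.continuous
  have hφ'c : Continuous (deriv φ) := (hφ.of_le (by have h := WithTop.coe_le_coe.mpr (le_top : (2:ℕ∞) ≤ ⊤); exact h) : ContDiff ℝ 2 φ).continuous_deriv (by norm_num)
  -- continuity helpers
  have crp : ∀ q : ℝ, 0 ≤ q → Continuous fun x : ℝ => x ^ q := fun q hq =>
    continuous_iff_continuousAt.mpr fun x => Real.continuousAt_rpow_const x q (Or.inr hq)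
  have cup : ∀ q : ℝ, 0 ≤ q → Continuous fun s : ℝ => u s ^ q := fun q hq =>
    continuous_iff_continuousAt.mpr fun x =>
      (Real.continuousAt_rpow_const (u x) q (Or.inr hq)).comp hdu.continuous.continuousAt
  have hunn : ∀ x ∈ Icc (0:ℝ) 1, 0 ≤ u x := by
    intro x hx
    rcases eq_or_lt_of_le hx.2 with h | h
    · rw [h, hu1]
    · exact (hupos x ⟨hx.1, h⟩).le
  -- derivative of v
  have hdvr : ∀ r : ℝ, deriv (fun s => deriv u s * φ s) r
      = deriv (deriv u) r * φ r + deriv u r * deriv φ r := fun r =>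
    ((hdw r).hasDerivAt.mul (hdφ r).hasDerivAt).deriv
  -- u' < 0 on (0,1)
  have hwneg : ∀ r ∈ Ioo (0:ℝ) 1, deriv u r < 0 := by
    intro r hr
    have hFanti : StrictAntiOn (fun s => s ^ ((N:ℝ)-1) * deriv u s) (Icc (0:ℝ) 1) := by
      apply strictAntiOn_of_deriv_neg (convex_Icc 0 1)
      · exact ((crp _ (by linarith)).mul hwc).continuousOn
      · intro x hx
        rw [interior_Icc] at hx
        rw [hODE x hx]
        have h1 : 0 < x ^ ((N:ℝ)-1+α) := Real.rpow_pos_of_pos hx.1 _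
        have h2 : 0 < u x ^ p := Real.rpow_pos_of_pos (hupos x ⟨hx.1.le, hx.2⟩) _
        nlinarith
    have h0 : (0:ℝ) ^ ((N:ℝ)-1) * deriv u 0 = 0 := by
      rw [Real.zero_rpow (by norm_num; linarith : (N:ℝ)-1 ≠ 0)]; ring
    have hlt : r ^ ((N:ℝ)-1) * deriv u r < (0:ℝ) ^ ((N:ℝ)-1) * deriv u 0 :=
      hFanti (left_mem_Icc.mpr zero_le_one) ⟨hr.1.le, hr.2.le⟩ hr.1
    rw [h0] at hlt
    have hrp : 0 < r ^ ((N:ℝ)-1) := Real.rpow_pos_of_pos hr.1 _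
    nlinarith
  -- key ODE identity for second derivative
  have hKey : ∀ r ∈ Ioo (0:ℝ) 1, r ^ ((N:ℝ)-1) * deriv (deriv u) r
      = -(r ^ ((N:ℝ)-1+α) * u r ^ p) - ((N:ℝ)-1) * r ^ ((N:ℝ)-2) * deriv u r := by
    intro r hr
    have hF : HasDerivAt (fun s => s ^ ((N:ℝ)-1) * deriv u s)
        (((N:ℝ)-1) * r ^ ((N:ℝ)-1-1) * deriv u r + r ^ ((N:ℝ)-1) * deriv (deriv u) r) r :=
      (Real.hasDerivAt_rpow_const (Or.inl hr.1.ne')).mul (hdw r).hasDerivAt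
    have h2 := hF.deriv
    rw [hODE r hr] at h2
    rw [show (N:ℝ)-1-1 = (N:ℝ)-2 by ring] at h2
    linarith [h2]
  set G : ℝ → ℝ := fun s =>
      -(s ^ ((N:ℝ)-1+α) * u s ^ p * φ s ^ 2 * deriv u s)
        - ((N:ℝ)-1) * (s ^ ((N:ℝ)-2) * φ s ^ 2 * deriv u s ^ 2) with hG_def
  set D : ℝ → ℝ := fun r =>
      r ^ ((N:ℝ)-1) * (deriv (fun s => deriv u s * φ s) r) ^ 2
        + ((N:ℝ)-1) * (r ^ ((N:ℝ)-3) * (deriv u r * φ r) ^ 2)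
        - p * (r ^ ((N:ℝ)-1+α) * u r ^ (p-1) * (deriv u r * φ r) ^ 2)
        - r ^ ((N:ℝ)-1) * (deriv u r * deriv φ r) ^ 2
        - α * (r ^ ((N:ℝ)-2+α) * u r ^ p * deriv u r * φ r ^ 2) with hD_def
  have hGD : ∀ r ∈ Ioo (0:ℝ) 1, HasDerivAt G (D r) r := by
    intro r hr
    have hrne : r ≠ 0 := hr.1.ne'
    have hupr : 0 < u r := hupos r ⟨hr.1.le, hr.2⟩
    have hX3 : (0:ℝ) < r ^ ((N:ℝ)-3) := Real.rpow_pos_of_pos hr.1 _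
    have e2 : r ^ ((N:ℝ)-2) = r ^ ((N:ℝ)-3) * r := by
      rw [show (N:ℝ)-2 = ((N:ℝ)-3)+1 by ring, Real.rpow_add_one hrne]
    have e3 : r ^ ((N:ℝ)-1) = r ^ ((N:ℝ)-3) * r * r := by
      rw [show (N:ℝ)-1 = (((N:ℝ)-3)+1)+1 by ring, Real.rpow_add_one hrne,
        Real.rpow_add_one hrne]
    have e4 : r ^ ((N:ℝ)-1+α) = r ^ ((N:ℝ)-3) * r * r * r ^ α := by
      rw [show (N:ℝ)-1+α = ((((N:ℝ)-3)+1)+1)+α by ring, Real.rpow_add hr.1,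
        Real.rpow_add_one hrne, Real.rpow_add_one hrne]
    have e5 : r ^ ((N:ℝ)-2+α) = r ^ ((N:ℝ)-3) * r * r ^ α := by
      rw [show (N:ℝ)-2+α = (((N:ℝ)-3)+1)+α by ring, Real.rpow_add hr.1,
        Real.rpow_add_one hrne]
    have e6 : r ^ ((N:ℝ)-1+α-1) = r ^ ((N:ℝ)-3) * r * r ^ α := by
      rw [show (N:ℝ)-1+α-1 = (((N:ℝ)-3)+1)+α by ring, Real.rpow_add hr.1,
        Real.rpow_add_one hrne]
    have e7 : r ^ ((N:ℝ)-2-1) = r ^ ((N:ℝ)-3) := by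
      rw [show (N:ℝ)-2-1 = (N:ℝ)-3 by ring]
    have eU : u r ^ p = u r ^ (p-1) * u r := by
      rw [← Real.rpow_add_one hupr.ne' (p-1)]
      congr 1; ring
    have hw2 : deriv (deriv u) r =
        (-(r ^ ((N:ℝ)-3) * r * r * r ^ α * (u r ^ (p-1) * u r))
          - ((N:ℝ)-1) * (r ^ ((N:ℝ)-3) * r) * deriv u r)
          / (r ^ ((N:ℝ)-3) * r * r) := by
      rw [eq_div_iff (mul_ne_zero (mul_ne_zero hX3.ne' hrne) hrne)]
      have hkey := hKey r hr
      rw [e3, e4, e2, eU] at hkey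
      linear_combination hkey
    have hWr : HasDerivAt (deriv u) (deriv (deriv u) r) r := (hdw r).hasDerivAt
    have hφr : HasDerivAt φ (deriv φ r) r := (hdφ r).hasDerivAt
    have h1 : HasDerivAt (fun s : ℝ => s ^ ((N:ℝ)-1+α)) (((N:ℝ)-1+α) * r ^ ((N:ℝ)-1+α-1)) r :=
      Real.hasDerivAt_rpow_const (Or.inl hrne)
    have h1b : HasDerivAt (fun s : ℝ => s ^ ((N:ℝ)-2)) (((N:ℝ)-2) * r ^ ((N:ℝ)-2-1)) r :=
      Real.hasDerivAt_rpow_const (Or.inl hrne)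
    have h2 : HasDerivAt (fun s => u s ^ p) (deriv u r * p * u r ^ (p-1)) r :=
      (hdu r).hasDerivAt.rpow_const (Or.inl hupr.ne')
    have h3 : HasDerivAt (fun s => φ s ^ 2) (((2:ℕ):ℝ) * φ r ^ (2-1) * deriv φ r) r := hφr.pow 2
    have h4 : HasDerivAt (fun s => deriv u s ^ 2)
        (((2:ℕ):ℝ) * deriv u r ^ (2-1) * deriv (deriv u) r) r := hWr.pow 2
    have hG' := (((h1.mul h2).mul h3).mul hWr).neg.sub
      (((h1b.mul h3).mul h4).const_mul ((N:ℝ)-1))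
    have hGr : HasDerivAt G _ r := hG'
    convert hGr using 1
    simp only [hD_def, hdvr r, Pi.mul_apply]
    rw [e2, e3, e4, e5, e6, e7, eU, hw2]
    field_simp
    ring
  -- continuity of integrands
  have hvc : Continuous fun r => deriv u r * φ r := hwc.mul hφc
  have hdvc : Continuous (deriv (fun s => deriv u s * φ s)) := by
    have h : deriv (fun s => deriv u s * φ s)
        = fun r => deriv (deriv u) r * φ r + deriv u r * deriv φ r := funext hdvr
    rw [h]; exact (hw'c.mul hφc).add (hwc.mul hφ'c)
  have c1 : Continuous fun r : ℝ => r ^ ((N:ℝ)-1) * (deriv (fun s => deriv u s * φ s) r) ^ 2 :=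
    (crp _ (by linarith)).mul (hdvc.pow 2)
  have c2 : Continuous fun r : ℝ => r ^ ((N:ℝ)-3) * (deriv u r * φ r) ^ 2 :=
    (crp _ (by linarith)).mul (hvc.pow 2)
  have c3 : Continuous fun r : ℝ => r ^ ((N:ℝ)-1+α) * u r ^ (p-1) * (deriv u r * φ r) ^ 2 :=
    ((crp _ (by linarith)).mul (cup _ (by linarith))).mul (hvc.pow 2)
  have c4 : Continuous fun r : ℝ => r ^ ((N:ℝ)-1) * (deriv u r * deriv φ r) ^ 2 :=
    (crp _ (by linarith)).mul ((hwc.mul hφ'c).pow 2)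
  have c5 : Continuous fun r : ℝ => r ^ ((N:ℝ)-2+α) * u r ^ p * deriv u r * φ r ^ 2 :=
    (((crp _ (by linarith)).mul (cup _ (by linarith))).mul hwc).mul (hφc.pow 2)
  have i1 : IntervalIntegrable _ MeasureTheory.volume (0:ℝ) 1 := c1.intervalIntegrable 0 1
  have i2 : IntervalIntegrable _ MeasureTheory.volume (0:ℝ) 1 := c2.intervalIntegrable 0 1
  have i3 : IntervalIntegrable _ MeasureTheory.volume (0:ℝ) 1 := c3.intervalIntegrable 0 1
  have i4 : IntervalIntegrable _ MeasureTheory.volume (0:ℝ) 1 := c4.intervalIntegrable 0 1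
  have i5 : IntervalIntegrable _ MeasureTheory.volume (0:ℝ) 1 := c5.intervalIntegrable 0 1
  have hDcont : Continuous D := by
    rw [hD_def]
    exact ((((c1.add (continuous_const.mul c2)).sub (continuous_const.mul c3)).sub c4).sub
      (continuous_const.mul c5))
  have hGcont : Continuous G := by
    rw [hG_def]
    exact ((((crp _ (by linarith)).mul (cup _ (by linarith))).mul (hφc.pow 2)).mul hwc).neg.sub
      (continuous_const.mul (((crp _ (by linarith)).mul (hφc.pow 2)).mul (hwc.pow 2)))
  have hφ1z : φ 1 = 0 := hφ0 1 ⟨by norm_num, le_refl 1⟩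
  have hG1 : G 1 = 0 := by simp [hG_def, hφ1z]
  have hG0 : G 0 = 0 := by
    have z1 : (0:ℝ) ^ ((N:ℝ)-1+α) = 0 :=
      Real.zero_rpow (by linarith : (0:ℝ) < (N:ℝ)-1+α).ne'
    have z2 : (0:ℝ) ^ ((N:ℝ)-2) = 0 :=
      Real.zero_rpow (by linarith : (0:ℝ) < (N:ℝ)-2).ne'
    simp [hG_def, z1, z2]
  have hD0 : (∫ r in (0:ℝ)..1, D r) = 0 := by
    rw [integral_eq_sub_of_hasDeriv_right_of_le zero_le_one hGcont.continuousOn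
      (fun x hx => (hGD x hx).hasDerivWithinAt) (hDcont.intervalIntegrable 0 1 : IntervalIntegrable _ MeasureTheory.volume 0 1), hG1, hG0,
      sub_zero]
  have hsplit : (∫ r in (0:ℝ)..1, D r)
      = (∫ r in (0:ℝ)..1, r ^ ((N:ℝ)-1) * (deriv (fun s => deriv u s * φ s) r) ^ 2)
        + ((N:ℝ)-1) * (∫ r in (0:ℝ)..1, r ^ ((N:ℝ)-3) * (deriv u r * φ r) ^ 2)
        - p * (∫ r in (0:ℝ)..1, r ^ ((N:ℝ)-1+α) * u r ^ (p-1) * (deriv u r * φ r) ^ 2)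
        - (∫ r in (0:ℝ)..1, r ^ ((N:ℝ)-1) * (deriv u r * deriv φ r) ^ 2)
        - α * (∫ r in (0:ℝ)..1, r ^ ((N:ℝ)-2+α) * u r ^ p * deriv u r * φ r ^ 2) := by
    simp only [hD_def]
    rw [integral_sub (((i1.add (i2.const_mul _)).sub (i3.const_mul _)).sub i4) (i5.const_mul _),
        integral_sub ((i1.add (i2.const_mul _)).sub (i3.const_mul _)) i4,
        integral_sub (i1.add (i2.const_mul _)) (i3.const_mul _),
        integral_add i1 (i2.const_mul _),
        integral_const_mul, integral_const_mul, integral_const_mul]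
  -- positivity of the denominator integral
  have hI3pos : 0 < ∫ r in (0:ℝ)..1,
      r ^ ((N:ℝ)-1+α) * u r ^ (p-1) * (deriv u r * φ r) ^ 2 := by
    have hi3a : IntervalIntegrable _ MeasureTheory.volume (0:ℝ) (1/3) := c3.intervalIntegrable 0 (1/3)
    have hi3b : IntervalIntegrable _ MeasureTheory.volume (1/3:ℝ) 1 := c3.intervalIntegrable (1/3) 1
    rw [← integral_add_adjacent_intervals hi3a hi3b]
    have hA : 0 < ∫ r in (0:ℝ)..(1/3),
        r ^ ((N:ℝ)-1+α) * u r ^ (p-1) * (deriv u r * φ r) ^ 2 := by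
      apply intervalIntegral_pos_of_pos_on hi3a _ (by norm_num)
      intro x hx
      have hx1 : x ∈ Ioo (0:ℝ) 1 := ⟨hx.1, by linarith [hx.2]⟩
      have hφx : φ x = 1 := hφ1 x ⟨hx.1.le, hx.2.le⟩
      have h1 : 0 < x ^ ((N:ℝ)-1+α) := Real.rpow_pos_of_pos hx.1 _
      have h2 : 0 < u x ^ (p-1) := Real.rpow_pos_of_pos (hupos x ⟨hx.1.le, hx1.2⟩) _
      have h3 : deriv u x < 0 := hwneg x hx1
      rw [hφx]
      have h4 : 0 < (deriv u x * 1) ^ 2 := by nlinarith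
      exact mul_pos (mul_pos h1 h2) h4
    have hB : 0 ≤ ∫ r in (1/3:ℝ)..1,
        r ^ ((N:ℝ)-1+α) * u r ^ (p-1) * (deriv u r * φ r) ^ 2 := by
      apply integral_nonneg (by norm_num)
      intro x hx
      have h0x : (0:ℝ) ≤ x := by linarith [hx.1]
      exact mul_nonneg (mul_nonneg (Real.rpow_nonneg h0x _)
        (Real.rpow_nonneg (hunn x ⟨h0x, hx.2⟩) _)) (sq_nonneg _)
    linarith
  have hpd : (0:ℝ) < p * ∫ r in (0:ℝ)..1,
      r ^ ((N:ℝ)-1+α) * u r ^ (p-1) * (deriv u r * φ r) ^ 2 := mul_pos hp0 hI3pos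
  -- final assembly
  have key : ((∫ r in (0:ℝ)..1, r ^ ((N:ℝ)-1) * (deriv (fun s => deriv u s * φ s) r) ^ 2)
        + ((N:ℝ)-1) * (∫ r in (0:ℝ)..1, r ^ ((N:ℝ)-3) * (deriv u r * φ r) ^ 2))
      / (p * ∫ r in (0:ℝ)..1, r ^ ((N:ℝ)-1+α) * u r ^ (p-1) * (deriv u r * φ r) ^ 2)
      = 1 + ((∫ r in (0:ℝ)..1, r ^ ((N:ℝ)-1) * (deriv u r * deriv φ r) ^ 2)
          + α * ∫ r in (0:ℝ)..1, r ^ ((N:ℝ)-2+α) * u r ^ p * deriv u r * φ r ^ 2)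
        / (p * ∫ r in (0:ℝ)..1, r ^ ((N:ℝ)-1+α) * u r ^ (p-1) * (deriv u r * φ r) ^ 2) := by
    rw [show (∫ r in (0:ℝ)..1, r ^ ((N:ℝ)-1) * (deriv (fun s => deriv u s * φ s) r) ^ 2)
        + ((N:ℝ)-1) * (∫ r in (0:ℝ)..1, r ^ ((N:ℝ)-3) * (deriv u r * φ r) ^ 2)
        = (p * ∫ r in (0:ℝ)..1, r ^ ((N:ℝ)-1+α) * u r ^ (p-1) * (deriv u r * φ r) ^ 2)
          + ((∫ r in (0:ℝ)..1, r ^ ((N:ℝ)-1) * (deriv u r * deriv φ r) ^ 2)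
          + α * ∫ r in (0:ℝ)..1, r ^ ((N:ℝ)-2+α) * u r ^ p * deriv u r * φ r ^ 2)
        from by linarith, add_div, div_self hpd.ne']
  refine le_of_le_of_eq (csInf_le ?_ ?_) key
  · refine ⟨0, ?_⟩
    rintro q ⟨v, hv, hv0, hv1, hvne, rfl⟩
    apply div_nonneg
    · have n1 : 0 ≤ ∫ r in (0:ℝ)..1, r ^ ((N:ℝ)-1) * (deriv v r) ^ 2 :=
        integral_nonneg zero_le_one fun x hx =>
          mul_nonneg (Real.rpow_nonneg hx.1 _) (sq_nonneg _)
      have n2 : 0 ≤ ∫ r in (0:ℝ)..1, r ^ ((N:ℝ)-3) * v r ^ 2 :=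
        integral_nonneg zero_le_one fun x hx =>
          mul_nonneg (Real.rpow_nonneg hx.1 _) (sq_nonneg _)
      have n3 : (0:ℝ) ≤ (N:ℝ)-1 := by linarith
      exact add_nonneg n1 (mul_nonneg n3 n2)
    · exact mul_nonneg hp0.le (integral_nonneg zero_le_one fun x hx =>
        mul_nonneg (mul_nonneg (Real.rpow_nonneg hx.1 _)
          (Real.rpow_nonneg (hunn x hx) _)) (sq_nonneg _))
  · refine ⟨fun r => deriv u r * φ r, hw1.mul hφ1', by simp [hu'0], by simp [hφ1z],
      hI3pos.ne', rfl⟩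
end
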